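/- arXiv:2403.06353 — 4 statements merged into one kernel-verified Lean document; each statement's English description precedes it below -/
import Mathlib

section
/- Assume the ξ_j are independent, sup_j E[|ξ_j|] < ∞, and there exist constants 0 < c₀ < ∞ and 0 < q₀ < 1 such that P(|ξ_j| < c₀) ≤ q₀ for every j. Then for every constant C₁ > 1 there exist constants c₂ > 0 and K < ∞ such that for every integer n ≥ 1 and every t ≥ 0, P( max_{0 ≤ j ≤ n} N_j((-1/C₁, 1/C₁)) ≥ t ) ≤ K·e^{−c₂·t}, where the maximum is over integers 0 ≤ j ≤ n (with p_0(x) = ξ_0). -/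
open Polynomial Finset Complex

noncomputable def Complex.abs : AbsoluteValue ℂ ℝ := NormedField.toAbsoluteValue ℂ

@[simp] lemma Complex.abs_apply (z : ℂ) : Complex.abs z = ‖z‖ := rfl

lemma Complex.norm_eq_abs (z : ℂ) : ‖z‖ = Complex.abs z := rfl

@[simp] lemma Complex.abs_exp (z : ℂ) : Complex.abs (Complex.exp z) = Real.exp z.re :=
  Complex.norm_exp z

@[simp] lemma Complex.abs_ofReal (r : ℝ) : Complex.abs (r : ℂ) = |r| := Complex.norm_real r

@[simp] lemma Complex.abs_natCast (n : ℕ) : Complex.abs (n : ℂ) = n := Complex.norm_natCast n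

@[simp] lemma Complex.abs_conj (z : ℂ) : Complex.abs ((starRingEnd ℂ) z) = Complex.abs z :=
  Complex.norm_conj z

lemma Complex.normSq_eq_abs (z : ℂ) : Complex.normSq z = Complex.abs z ^ 2 :=
  Complex.normSq_eq_norm_sq z

/-- Maximum modulus principle for polynomials on a disk. -/
lemma maxmod (f : Polynomial ℂ) (ρ : ℝ) (hρ : 0 < ρ) (S : ℝ)
    (h : ∀ z : ℂ, Complex.abs z = ρ → Complex.abs (f.eval z) ≤ S)
    (z₀ : ℂ) (hz₀ : Complex.abs z₀ ≤ ρ) : Complex.abs (f.eval z₀) ≤ S := by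
  have hd : DiffContOnCl ℂ (fun z => f.eval z) (Metric.ball (0:ℂ) ρ) :=
    (f.differentiable).diffContOnCl
  have hfr : frontier (Metric.ball (0:ℂ) ρ) = Metric.sphere 0 ρ := frontier_ball 0 hρ.ne'
  have := Complex.norm_le_of_forall_mem_frontier_norm_le (Metric.isBounded_ball) hd
    (C := S) (fun z hz => by
      rw [hfr] at hz
      exact h z (by simpa [Complex.abs_apply, Complex.dist_eq] using hz))
    (z := z₀) (by
      rw [closure_ball 0 hρ.ne']
      simpa [Metric.mem_closedBall, Complex.dist_eq] using hz₀)
  simpa using this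


lemma extraction (f : Polynomial ℂ) (k₀ : ℕ) (R : ℝ) (hR : 0 < R) :
    ∃ z : ℂ, Complex.abs z = R ∧ Complex.abs (f.coeff k₀) * R ^ k₀ ≤ Complex.abs (f.eval z) := by
  classical
  set L : ℕ := max f.natDegree k₀ + 1 with hL
  have hL0 : L ≠ 0 := Nat.succ_ne_zero _
  have hk₀L : k₀ < L := lt_of_le_of_lt (le_max_right _ _) (Nat.lt_succ_self _)
  set ζ : ℂ := Complex.exp (2 * Real.pi * I / L) with hζ
  have hprim : IsPrimitiveRoot ζ L := Complex.isPrimitiveRoot_exp L hL0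
  have habs1 : Complex.abs ζ = 1 := by
    rw [hζ, Complex.abs_exp]
    have : (2 * Real.pi * I / L).re = 0 := by
      simp [Complex.div_re, Complex.mul_I_re, Complex.mul_I_im]
    simp [this]
  have key : ∑ l ∈ range L, f.eval ((R:ℂ) * ζ ^ l) * (ζ ^ (L - k₀)) ^ l
      = L * (f.coeff k₀ * (R:ℂ) ^ k₀) := by
    have heval : ∀ l : ℕ, f.eval ((R:ℂ) * ζ ^ l)
        = ∑ i ∈ range L, f.coeff i * ((R:ℂ) ^ i * (ζ ^ i) ^ l) := by
      intro l
      rw [eval_eq_sum_range' (lt_of_le_of_lt (le_max_left _ _) (Nat.lt_succ_self _))]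
      refine Finset.sum_congr rfl fun i _ => ?_
      ring_nf
    calc ∑ l ∈ range L, f.eval ((R:ℂ) * ζ ^ l) * (ζ ^ (L - k₀)) ^ l
        = ∑ l ∈ range L, ∑ i ∈ range L,
            f.coeff i * (R:ℂ) ^ i * (ζ ^ (i + (L - k₀))) ^ l := by
          refine Finset.sum_congr rfl fun l _ => ?_
          rw [heval l, Finset.sum_mul]
          refine Finset.sum_congr rfl fun i _ => ?_
          rw [pow_add, mul_pow]; ring
      _ = ∑ i ∈ range L, f.coeff i * (R:ℂ) ^ i * ∑ l ∈ range L, (ζ ^ (i + (L - k₀))) ^ l := by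
          rw [Finset.sum_comm]
          exact Finset.sum_congr rfl fun i _ => by rw [Finset.mul_sum]
      _ = ∑ i ∈ range L, f.coeff i * (R:ℂ) ^ i * (if i = k₀ then (L:ℂ) else 0) := by
          refine Finset.sum_congr rfl fun i hi => ?_
          congr 1
          by_cases h : i = k₀
          · rw [h, if_pos rfl]
            have h1 : ζ ^ (k₀ + (L - k₀)) = 1 := by
              rw [Nat.add_sub_cancel' hk₀L.le]
              exact hprim.pow_eq_one
            simp [h1]
          · have hne : ζ ^ (i + (L - k₀)) ≠ 1 := by
              intro h1
              have hdvd := (hprim.pow_eq_one_iff_dvd _).mp h1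
              obtain ⟨c, hc⟩ := hdvd
              have hi' : i < L := Finset.mem_range.mp hi
              have h1' : 0 < i + (L - k₀) := by omega
              have h2 : i + (L - k₀) < 2 * L := by omega
              have hc2 : c < 2 := by
                by_contra hc2
                push_neg at hc2
                have : L * 2 ≤ L * c := Nat.mul_le_mul_left L hc2
                omega
              interval_cases c <;> omega
            rw [geom_sum_eq hne]
            have : (ζ ^ (i + (L - k₀))) ^ L = 1 := by
              rw [← pow_mul, mul_comm, pow_mul, hprim.pow_eq_one, one_pow]
            simp [this, h]
      _ = L * (f.coeff k₀ * (R:ℂ) ^ k₀) := by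
          simp only [mul_ite, mul_zero]
          rw [Finset.sum_ite_eq' (range L) k₀ (fun i => f.coeff i * (R:ℂ) ^ i * L)]
          rw [if_pos (Finset.mem_range.mpr hk₀L)]
          ring
  -- from key, get the bound
  have habs : (L : ℝ) * (Complex.abs (f.coeff k₀) * R ^ k₀)
      ≤ ∑ l ∈ range L, Complex.abs (f.eval ((R:ℂ) * ζ ^ l)) := by
    calc (L : ℝ) * (Complex.abs (f.coeff k₀) * R ^ k₀)
        = Complex.abs (↑L * (f.coeff k₀ * (R:ℂ) ^ k₀)) := by
          rw [map_mul, map_mul]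
          simp [Complex.abs_natCast, abs_of_pos hR]
      _ = Complex.abs (∑ l ∈ range L, f.eval ((R:ℂ) * ζ ^ l) * (ζ ^ (L - k₀)) ^ l) := by
          rw [key]
      _ ≤ ∑ l ∈ range L, Complex.abs (f.eval ((R:ℂ) * ζ ^ l) * (ζ ^ (L - k₀)) ^ l) :=
          Complex.abs.sum_le _ _
      _ = ∑ l ∈ range L, Complex.abs (f.eval ((R:ℂ) * ζ ^ l)) := by
          refine Finset.sum_congr rfl fun l _ => ?_
          rw [map_mul, map_pow, map_pow, habs1]
          simp
  obtain ⟨l, hl, hle⟩ : ∃ l ∈ range L,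
      Complex.abs (f.coeff k₀) * R ^ k₀ ≤ Complex.abs (f.eval ((R:ℂ) * ζ ^ l)) := by
    by_contra hcon
    push_neg at hcon
    have : ∑ l ∈ range L, Complex.abs (f.eval ((R:ℂ) * ζ ^ l))
        < ∑ _l ∈ range L, Complex.abs (f.coeff k₀) * R ^ k₀ := by
      refine Finset.sum_lt_sum_of_nonempty ⟨0, Finset.mem_range.mpr (Nat.pos_of_ne_zero hL0)⟩
        fun l hl => hcon l hl
    rw [Finset.sum_const, Finset.card_range, nsmul_eq_mul] at this
    linarith
  exact ⟨(R:ℂ) * ζ ^ l, by rw [map_mul, map_pow, habs1]; simp [abs_of_pos hR], hle⟩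


lemma blaschke_eq (ρ : ℝ) (x : ℝ) (z : ℂ) (hz : Complex.abs z = ρ) :
    Complex.abs ((ρ^2 : ℂ) - (x:ℂ) * z) = ρ * Complex.abs (z - (x:ℂ)) := by
  have h1 : ((ρ^2 : ℝ) : ℂ) = z * (starRingEnd ℂ) z := by
    rw [Complex.mul_conj]
    norm_cast
    rw [Complex.normSq_eq_abs, hz]
  have h2 : (ρ^2 : ℂ) - (x:ℂ) * z = z * (starRingEnd ℂ) (z - (x:ℂ)) := by
    rw [map_sub, Complex.conj_ofReal]
    have h1' : (↑ρ:ℂ)^2 = z * (starRingEnd ℂ) z := by push_cast at h1 ⊢; exact h1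
    rw [h1']; ring
  rw [h2, map_mul, Complex.abs_conj, hz]

lemma core (r ρ ρ₀ c₀ S : ℝ) (hr : 0 < r) (hρr : r < ρ) (hρ₀ : 0 < ρ₀) (hρ₀ρ : ρ₀ < ρ)
    (P : Polynomial ℝ) (k₀ : ℕ) (hc₀ : 0 < c₀) (hck : c₀ ≤ |P.coeff k₀|)
    (T : Finset ℝ) (hT : ∀ x ∈ T, x ∈ Set.Ioo (-r) r ∧ P.eval x = 0)
    (hS : ∀ z : ℂ, Complex.abs z = ρ → Complex.abs ((P.map (algebraMap ℝ ℂ)).eval z) ≤ S) :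
    c₀ * ρ₀ ^ k₀ * ((ρ^2 - r*ρ₀)/(ρ*(ρ₀+r))) ^ T.card ≤ S := by
  classical
  set D : ℝ := (ρ^2 - r*ρ₀)/(ρ*(ρ₀+r)) with hD
  set N : ℕ := T.card with hN
  have hP0 : P ≠ 0 := fun h => by simp [h] at hck; linarith
  have habs : ∀ x ∈ T, |x| < r := by
    intro x hx
    exact abs_lt.mpr ⟨(hT x hx).1.1, (hT x hx).1.2⟩
  -- divisibility
  have hdvd : (∏ x ∈ T, (X - C x)) ∣ P := by
    rw [show (∏ x ∈ T, (X - C x)) = (T.val.map fun a => X - C a).prod from rfl]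
    rw [Multiset.prod_X_sub_C_dvd_iff_le_roots hP0]
    rw [Multiset.le_iff_count]
    intro x
    by_cases hx : x ∈ T
    · rw [Polynomial.count_roots]
      have h1 : T.val.count x = 1 := by
        rw [Multiset.count_eq_one_of_mem T.nodup hx]
      rw [h1]
      exact (Polynomial.rootMultiplicity_pos hP0).mpr (hT x hx).2
    · rw [Multiset.count_eq_zero_of_notMem (by simpa using hx)]
      exact Nat.zero_le _
  obtain ⟨Q, hQ⟩ := hdvd
  -- complex versions
  set Pc := P.map (algebraMap ℝ ℂ) with hPc
  set Qc := Q.map (algebraMap ℝ ℂ) with hQc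
  have hPcQ : Pc = (∏ x ∈ T, (X - C (x:ℂ))) * Qc := by
    rw [hPc, hQ, Polynomial.map_mul, Polynomial.map_prod]
    congr 1
    refine Finset.prod_congr rfl fun x _ => ?_
    simp
  -- extraction at radius ρ₀
  obtain ⟨z₀, hz₀abs, hz₀⟩ := extraction Pc k₀ ρ₀ hρ₀
  have hck' : c₀ * ρ₀ ^ k₀ ≤ Complex.abs (Pc.eval z₀) := by
    refine le_trans ?_ hz₀
    have : Complex.abs (Pc.coeff k₀) = |P.coeff k₀| := by
      rw [hPc, Polynomial.coeff_map]
      simp [Complex.abs_ofReal]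
    rw [this]
    have : (0:ℝ) ≤ ρ₀ ^ k₀ := by positivity
    nlinarith
  -- the Blaschke-modified polynomial
  set g : Polynomial ℂ := Qc * ∏ x ∈ T, (C ((ρ^2 : ℝ) : ℂ) - C (x:ℂ) * X) with hg
  have hgev : ∀ z : ℂ, g.eval z = Qc.eval z * ∏ x ∈ T, ((ρ^2 : ℂ) - (x:ℂ) * z) := by
    intro z
    rw [hg]
    simp only [Polynomial.eval_mul, Polynomial.eval_prod, Polynomial.eval_sub,
      Polynomial.eval_C, Polynomial.eval_mul, Polynomial.eval_X]
    push_cast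
    ring_nf
    congr 1; exact Finset.prod_congr rfl fun x _ => by ring
  have hPcev : ∀ z : ℂ, Complex.abs (Pc.eval z)
      = (∏ x ∈ T, Complex.abs (z - (x:ℂ))) * Complex.abs (Qc.eval z) := by
    intro z
    rw [hPcQ]
    rw [Polynomial.eval_mul, map_mul, Polynomial.eval_prod, map_prod Complex.abs]
    simp
  -- bound on sphere of radius ρ
  have hρpos : 0 < ρ := hρ₀.trans hρ₀ρ
  have hsphere : ∀ z : ℂ, Complex.abs z = ρ → Complex.abs (g.eval z) ≤ ρ^N * S := by
    intro z hzρ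
    rw [hgev]
    rw [map_mul]
    have h1 : Complex.abs (∏ x ∈ T, ((ρ^2 : ℂ) - (x:ℂ) * z))
        = ρ^N * ∏ x ∈ T, Complex.abs (z - (x:ℂ)) := by
      rw [map_prod Complex.abs]
      rw [Finset.prod_congr rfl fun x _ => blaschke_eq ρ x z hzρ]
      rw [Finset.prod_mul_distrib]
      simp [hN]
    rw [h1]
    have h2 := hS z hzρ
    rw [hPcev z] at h2
    have h3 : (0:ℝ) ≤ ∏ x ∈ T, Complex.abs (z - (x:ℂ)) :=
      Finset.prod_nonneg fun x _ => AbsoluteValue.nonneg _ _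
    calc Complex.abs (Qc.eval z) * (ρ^N * ∏ x ∈ T, Complex.abs (z - (x:ℂ)))
        = ρ^N * ((∏ x ∈ T, Complex.abs (z - (x:ℂ))) * Complex.abs (Qc.eval z)) := by ring
      _ ≤ ρ^N * S := by
          refine mul_le_mul_of_nonneg_left h2 (by positivity)
  -- maximum modulus
  have hmax : Complex.abs (g.eval z₀) ≤ ρ^N * S :=
    maxmod g ρ hρpos _ hsphere z₀ (by rw [hz₀abs]; exact hρ₀ρ.le)
  -- lower bound at z₀
  have hDpos : 0 < D := by
    rw [hD]
    have : 0 < ρ^2 - r*ρ₀ := by nlinarith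
    have : 0 < ρ*(ρ₀+r) := by positivity
    positivity
  have hlow : (D * ρ)^N * Complex.abs (Pc.eval z₀) ≤ Complex.abs (g.eval z₀) := by
    rw [hgev, map_mul, hPcev]
    have hfac : ∀ x ∈ T, D * ρ * Complex.abs (z₀ - (x:ℂ)) ≤ Complex.abs ((ρ^2 : ℂ) - (x:ℂ) * z₀) := by
      intro x hx
      have h1 : Complex.abs (z₀ - (x:ℂ)) ≤ ρ₀ + r := by
        calc Complex.abs (z₀ - (x:ℂ)) ≤ Complex.abs z₀ + Complex.abs ((x:ℂ)) := by
              exact (AbsoluteValue.sub_le _ _ 0 _).trans_eq (by simp)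
          _ ≤ ρ₀ + r := by
              rw [hz₀abs]
              simp only [Complex.abs_ofReal]
              linarith [habs x hx]
      have h2 : ρ^2 - r*ρ₀ ≤ Complex.abs ((ρ^2 : ℂ) - (x:ℂ) * z₀) := by
        have hns := norm_sub_norm_le ((ρ:ℂ)^2) ((x:ℂ) * z₀)
        simp only [Complex.norm_eq_abs] at hns
        have ha : Complex.abs ((ρ:ℂ)^2) = ρ^2 := by
          rw [map_pow]
          simp [Complex.abs_ofReal, abs_of_pos hρpos]
        have hb : Complex.abs ((x:ℂ) * z₀) = |x| * ρ₀ := by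
          rw [map_mul, hz₀abs, Complex.abs_ofReal]
        rw [ha, hb] at hns
        have := habs x hx
        have habsnn : (0:ℝ) ≤ |x| := abs_nonneg x
        nlinarith
      have h3 : D * ρ * (ρ₀ + r) = ρ^2 - r*ρ₀ := by
        rw [hD]; field_simp
      calc D * ρ * Complex.abs (z₀ - (x:ℂ)) ≤ D * ρ * (ρ₀ + r) := by
            refine mul_le_mul_of_nonneg_left h1 (by positivity)
        _ = ρ^2 - r*ρ₀ := h3
        _ ≤ _ := h2
    calc (D * ρ)^N * ((∏ x ∈ T, Complex.abs (z₀ - (x:ℂ))) * Complex.abs (Qc.eval z₀))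
        = (∏ x ∈ T, (D * ρ * Complex.abs (z₀ - (x:ℂ)))) * Complex.abs (Qc.eval z₀) := by
          rw [Finset.prod_mul_distrib]
          simp [hN]
          ring
      _ ≤ (∏ x ∈ T, Complex.abs ((ρ^2 : ℂ) - (x:ℂ) * z₀)) * Complex.abs (Qc.eval z₀) := by
          refine mul_le_mul_of_nonneg_right ?_ (AbsoluteValue.nonneg _ _)
          refine Finset.prod_le_prod (fun x hx => ?_) hfac
          positivity
      _ = Complex.abs (Qc.eval z₀) * Complex.abs (∏ x ∈ T, ((ρ^2 : ℂ) - (x:ℂ) * z₀)) := by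
          rw [map_prod Complex.abs]; ring
  -- combine
  have hfinal : (D * ρ)^N * (c₀ * ρ₀ ^ k₀) ≤ ρ^N * S := by
    calc (D * ρ)^N * (c₀ * ρ₀ ^ k₀) ≤ (D * ρ)^N * Complex.abs (Pc.eval z₀) := by
          refine mul_le_mul_of_nonneg_left hck' (by positivity)
      _ ≤ Complex.abs (g.eval z₀) := hlow
      _ ≤ ρ^N * S := hmax
  have hρN : (0:ℝ) < ρ^N := by positivity
  rw [mul_pow] at hfinal
  calc c₀ * ρ₀ ^ k₀ * D ^ N = (D^N * (c₀ * ρ₀^k₀)) := by ring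
    _ ≤ S := by
        by_contra hcon
        push_neg at hcon
        nlinarith [pow_nonneg hDpos.le N]


lemma Dbound (r : ℝ) (hr0 : 0 < r) (hr1 : r < 1) :
    1 + (1-r)/8 ≤ (((1+r)/2)^2 - r*((1-r^2)/16))/(((1+r)/2)*(((1-r^2)/16)+r)) := by
  rw [le_div_iff₀ (by nlinarith)]
  nlinarith [sq_nonneg r, sq_nonneg (1-r), sq_nonneg (1+r), mul_pos hr0 hr0,
    mul_nonneg (mul_nonneg hr0.le hr0.le) hr0.le, sq_nonneg (r*(1-r))]

lemma det (r : ℝ) (hr0 : 0 < r) (hr1 : r < 1) (a : ℕ → ℝ) (j k₀ : ℕ) (hk₀j : k₀ ≤ j)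
    (c₀ : ℝ) (hc₀ : 0 < c₀) (hbig : c₀ ≤ |a k₀|) (s : ℝ)
    (hs : ∑ i ∈ Finset.range (j+1), |a i| * ((1+r)/2)^i ≤ s) :
    c₀ * ((1-r^2)/16) ^ k₀ * (1 + (1-r)/8) ^
      (Set.ncard {x : ℝ | x ∈ Set.Ioo (-r) r ∧
        ∑ i ∈ Finset.range (j+1), a i * x^i = 0}) ≤ s := by
  classical
  set ρ : ℝ := (1+r)/2 with hρdef
  set ρ₀ : ℝ := (1-r^2)/16 with hρ₀def
  have hρ0 : 0 < ρ := by rw [hρdef]; linarith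
  have hρr : r < ρ := by rw [hρdef]; linarith
  have hρ1 : ρ < 1 := by rw [hρdef]; linarith
  have hρ₀0 : 0 < ρ₀ := by rw [hρ₀def]; nlinarith
  have hρ₀ρ : ρ₀ < ρ := by rw [hρ₀def, hρdef]; nlinarith
  set P : Polynomial ℝ := ∑ i ∈ Finset.range (j+1), C (a i) * X^i with hPdef
  have hcoeff : ∀ k, k ≤ j → P.coeff k = a k := by
    intro k hk
    rw [hPdef, Polynomial.finset_sum_coeff]
    rw [Finset.sum_congr rfl fun i _ => by
      rw [Polynomial.coeff_C_mul, Polynomial.coeff_X_pow]]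
    simp only [mul_ite, mul_one, mul_zero]
    rw [Finset.sum_ite_eq (Finset.range (j+1)) k (fun i => a i)]
    rw [if_pos (Finset.mem_range.mpr (Nat.lt_succ_of_le hk))]
  have heval : ∀ x : ℝ, P.eval x = ∑ i ∈ Finset.range (j+1), a i * x^i := by
    intro x
    rw [hPdef, Polynomial.eval_finset_sum]
    exact Finset.sum_congr rfl fun i _ => by simp
  have hP0 : P ≠ 0 := by
    intro h
    have := hcoeff k₀ hk₀j
    rw [h] at this
    simp at this
    rw [← this] at hbig
    simp at hbig
    linarith
  have hfin : {x : ℝ | x ∈ Set.Ioo (-r) r ∧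
      ∑ i ∈ Finset.range (j+1), a i * x^i = 0}.Finite := by
    refine Set.Finite.subset (Polynomial.finite_setOf_isRoot hP0) ?_
    intro x hx
    simp only [Set.mem_setOf_eq, Polynomial.IsRoot]
    rw [heval]
    exact hx.2
  set T : Finset ℝ := hfin.toFinset with hTdef
  have hcard : {x : ℝ | x ∈ Set.Ioo (-r) r ∧
      ∑ i ∈ Finset.range (j+1), a i * x^i = 0}.ncard = T.card := by
    rw [hTdef, Set.ncard_eq_toFinset_card _ hfin]
  have hT : ∀ x ∈ T, x ∈ Set.Ioo (-r) r ∧ P.eval x = 0 := by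
    intro x hx
    rw [hTdef, Set.Finite.mem_toFinset] at hx
    exact ⟨hx.1, by rw [heval]; exact hx.2⟩
  -- eval bound on the sphere
  have hS : ∀ z : ℂ, Complex.abs z = ρ →
      Complex.abs ((P.map (algebraMap ℝ ℂ)).eval z) ≤ s := by
    intro z hz
    have hev : (P.map (algebraMap ℝ ℂ)).eval z
        = ∑ i ∈ Finset.range (j+1), ((a i : ℂ)) * z^i := by
      rw [hPdef, Polynomial.map_sum]
      rw [Polynomial.eval_finset_sum]
      refine Finset.sum_congr rfl fun i _ => ?_
      simp
    rw [hev]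
    calc Complex.abs (∑ i ∈ Finset.range (j+1), ((a i : ℂ)) * z^i)
        ≤ ∑ i ∈ Finset.range (j+1), Complex.abs (((a i : ℂ)) * z^i) :=
          Complex.abs.sum_le _ _
      _ = ∑ i ∈ Finset.range (j+1), |a i| * ρ^i := by
          refine Finset.sum_congr rfl fun i _ => ?_
          rw [map_mul, map_pow, hz, Complex.abs_ofReal]
      _ ≤ s := hs
  have hcore := core r ρ ρ₀ c₀ s hr0 hρr hρ₀0 hρ₀ρ P k₀ hc₀
    (by rw [hcoeff k₀ hk₀j]; exact hbig) T hT hS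
  rw [hcard]
  calc c₀ * ρ₀ ^ k₀ * (1 + (1-r)/8) ^ T.card
      ≤ c₀ * ρ₀ ^ k₀ * ((ρ^2 - r*ρ₀)/(ρ*(ρ₀+r))) ^ T.card := by
        refine mul_le_mul_of_nonneg_left ?_ (by positivity)
        refine pow_le_pow_left₀ (by linarith) ?_ _
        rw [hρdef, hρ₀def]
        exact Dbound r hr0 hr1
    _ ≤ s := hcore


lemma ncard_le_deg (r : ℝ) (hr0 : 0 < r) (a : ℕ → ℝ) (j : ℕ) :
    Set.ncard {x : ℝ | x ∈ Set.Ioo (-r) r ∧ ∑ i ∈ Finset.range (j+1), a i * x^i = 0} ≤ j := by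
  classical
  set P : Polynomial ℝ := ∑ i ∈ Finset.range (j+1), C (a i) * X^i with hPdef
  have heval : ∀ x : ℝ, P.eval x = ∑ i ∈ Finset.range (j+1), a i * x^i := by
    intro x
    rw [hPdef, Polynomial.eval_finset_sum]
    exact Finset.sum_congr rfl fun i _ => by simp
  by_cases hP : P = 0
  · have hset : {x : ℝ | x ∈ Set.Ioo (-r) r ∧ ∑ i ∈ Finset.range (j+1), a i * x^i = 0}
        = Set.Ioo (-r) r := by
      ext x
      simp only [Set.mem_setOf_eq, and_iff_left_iff_imp]
      intro _
      rw [← heval, hP]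
      simp
    rw [hset, Set.Infinite.ncard (Set.Ioo_infinite (by linarith))]
    exact Nat.zero_le _
  · have hsub : {x : ℝ | x ∈ Set.Ioo (-r) r ∧ ∑ i ∈ Finset.range (j+1), a i * x^i = 0}
        ⊆ ↑P.roots.toFinset := by
      intro x hx
      simp only [Finset.coe_sort_coe, Multiset.mem_toFinset, Finset.mem_coe]
      rw [Polynomial.mem_roots hP, Polynomial.IsRoot, heval]
      exact hx.2
    calc Set.ncard {x : ℝ | x ∈ Set.Ioo (-r) r ∧ ∑ i ∈ Finset.range (j+1), a i * x^i = 0}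
        ≤ Set.ncard (↑P.roots.toFinset : Set ℝ) :=
          Set.ncard_le_ncard hsub (P.roots.toFinset.finite_toSet)
      _ = P.roots.toFinset.card := Set.ncard_coe_finset _
      _ ≤ Multiset.card P.roots := Multiset.toFinset_card_le _
      _ ≤ P.natDegree := Polynomial.card_roots' P
      _ ≤ j := by
          rw [hPdef]
          refine Polynomial.natDegree_sum_le_of_forall_le _ _ fun i hi => ?_
          refine (Polynomial.natDegree_C_mul_le _ _).trans ?_
          rw [Polynomial.natDegree_X_pow]
          exact Nat.lt_succ_iff.mp (Finset.mem_range.mp hi)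

open MeasureTheory ProbabilityTheory Filter

/-- The Kac polynomial `p_n(x) = ξ_0 + ξ_1 x + ⋯ + ξ_n x^n`. -/
noncomputable def kacPoly {Ω : Type*} (ξ : ℕ → Ω → ℝ) (n : ℕ) (ω : Ω) (x : ℝ) : ℝ :=
  ∑ j ∈ Finset.range (n + 1), ξ j ω * x ^ j

/-- The number of real roots of `p_n` inside `I` (zero if infinite). -/
noncomputable def kacRoots {Ω : Type*} (ξ : ℕ → Ω → ℝ) (n : ℕ) (ω : Ω) (I : Set ℝ) : ℕ :=
  Set.ncard {x : ℝ | x ∈ I ∧ kacPoly ξ n ω x = 0}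

set_option maxHeartbeats 1000000

theorem stmt_10 {Ω : Type*} [MeasureSpace Ω] [IsProbabilityMeasure (ℙ : Measure Ω)]
    (ξ : ℕ → Ω → ℝ) (hmeas : ∀ j, Measurable (ξ j))
    (hindep : iIndepFun ξ ℙ)
    (hint : ∀ j, Integrable (ξ j) ℙ)
    (A : ℝ) (habs : ∀ j, ∫ ω, |ξ j ω| ∂ℙ ≤ A)
    (c₀ q₀ : ℝ) (hc₀ : 0 < c₀) (hq₀0 : 0 < q₀) (hq₀1 : q₀ < 1)
    (hsmall : ∀ j, ℙ {ω | |ξ j ω| < c₀} ≤ ENNReal.ofReal q₀)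
    (C₁ : ℝ) (hC₁ : 1 < C₁) :
    ∃ c₂ > (0 : ℝ), ∃ K : ℝ, ∀ n : ℕ, ∀ t : ℝ, 0 ≤ t →
      ℙ {ω | ∃ j : ℕ, j ≤ n ∧
          t ≤ (kacRoots ξ j ω (Set.Ioo (-(1/C₁)) (1/C₁)) : ℝ)}
        ≤ ENNReal.ofReal (K * Real.exp (-c₂ * t)) := by
  classical
  have hC₁0 : (0:ℝ) < C₁ := lt_trans one_pos hC₁
  set r : ℝ := 1/C₁ with hrdef
  have hr0 : 0 < r := by positivity
  have hr1 : r < 1 := by rw [hrdef, div_lt_one hC₁0]; exact hC₁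
  set ρ : ℝ := (1+r)/2 with hρdef
  have hρ0 : 0 < ρ := by rw [hρdef]; linarith
  have hρ1 : ρ < 1 := by rw [hρdef]; linarith
  set ρ₀ : ℝ := (1-r^2)/16 with hρ₀def
  have hρ₀0 : 0 < ρ₀ := by rw [hρ₀def]; nlinarith
  have hρ₀1 : ρ₀ < 1 := by rw [hρ₀def]; nlinarith
  set D₀ : ℝ := 1 + (1-r)/8 with hD₀def
  have hD₀1 : 1 < D₀ := by rw [hD₀def]; linarith
  set d : ℝ := Real.log D₀ with hddef
  have hd0 : 0 < d := Real.log_pos hD₀1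
  set L₀ : ℝ := -Real.log ρ₀ with hL₀def
  have hL₀0 : 0 < L₀ := by
    have := Real.log_neg hρ₀0 hρ₀1
    rw [hL₀def]; linarith
  set ε : ℝ := d/4 with hεdef
  have hε0 : 0 < ε := by rw [hεdef]; linarith
  set δ : ℝ := min (d/(4*L₀)) (1/2) with hδdef
  have hδ0 : 0 < δ := lt_min (by positivity) one_half_pos
  have hδhalf : δ ≤ 1/2 := min_le_right _ _
  have hδL : δ * L₀ ≤ d/4 := by
    have h1 : δ ≤ d/(4*L₀) := min_le_left _ _
    calc δ * L₀ ≤ (d/(4*L₀)) * L₀ := mul_le_mul_of_nonneg_right h1 hL₀0.le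
      _ = d/4 := by field_simp
  set cq : ℝ := δ * (-Real.log q₀) with hcqdef
  have hlogq : Real.log q₀ < 0 := Real.log_neg hq₀0 hq₀1
  have hcq0 : 0 < cq := by rw [hcqdef]; exact mul_pos hδ0 (by linarith)
  set c₂ : ℝ := min cq ε with hc₂def
  have hc₂0 : 0 < c₂ := lt_min hcq0 hε0
  have hA0 : 0 ≤ A :=
    le_trans (integral_nonneg fun ω => abs_nonneg _) (habs 0)
  set K₂ : ℝ := A/((1-ρ)*c₀) with hK₂def
  have hK₂0 : 0 ≤ K₂ := by
    rw [hK₂def]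
    have : 0 < (1-ρ)*c₀ := mul_pos (by linarith) hc₀
    positivity
  clear_value K₂ c₂ cq δ ε L₀ d D₀ ρ₀ ρ r
  refine ⟨c₂, hc₂0, 1 + K₂, ?_⟩
  intro n t ht
  rcases eq_or_lt_of_le ht with h0|ht0
  · -- t = 0
    calc ℙ _ ≤ 1 := prob_le_one
      _ ≤ ENNReal.ofReal ((1+K₂) * Real.exp (-c₂*t)) := by
          rw [← h0]
          simp only [mul_zero, neg_zero, Real.exp_zero, mul_one]
          rw [← ENNReal.ofReal_one]
          exact ENNReal.ofReal_le_ofReal (by linarith)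
  · -- t > 0
    set m : ℕ := ⌊δ*t⌋₊ with hmdef
    have hmle : (m:ℝ) ≤ δ*t := Nat.floor_le (by positivity)
    have hmge : δ*t < (m:ℝ)+1 := Nat.lt_floor_add_one _
    clear_value m
    set s : ℝ := c₀ * Real.exp (ε*t) with hsdef
    have hs0 : 0 < s := by rw [hsdef]; positivity
    set Sn : Ω → ℝ := fun ω => ∑ i ∈ Finset.range (n+1), |ξ i ω| * ρ^i with hSndef
    set B₁ : Set Ω := ⋂ k ∈ Finset.range (m+1), {ω | |ξ k ω| < c₀} with hB₁def
    set B₂ : Set Ω := {ω | s ≤ Sn ω} with hB₂def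
    -- inclusion of the event
    have hsub : {ω | ∃ j : ℕ, j ≤ n ∧
        t ≤ (kacRoots ξ j ω (Set.Ioo (-r) r) : ℝ)} ⊆ B₁ ∪ B₂ := by
      intro ω hω
      by_contra hc
      simp only [Set.mem_union, not_or] at hc
      obtain ⟨hc1, hc2⟩ := hc
      -- get a big coefficient
      have hk₀ : ∃ k₀, k₀ ≤ m ∧ c₀ ≤ |ξ k₀ ω| := by
        rw [hB₁def] at hc1
        simp only [Set.mem_iInter, Set.mem_setOf_eq, not_forall] at hc1
        obtain ⟨k₀, hk₀mem, hk₀⟩ := hc1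
        exact ⟨k₀, Nat.lt_succ_iff.mp (Finset.mem_range.mp hk₀mem), not_lt.mp hk₀⟩
      obtain ⟨k₀, hk₀m, hk₀big⟩ := hk₀
      have hSns : Sn ω < s := not_le.mp (by rw [hB₂def] at hc2; exact hc2)
      obtain ⟨j, hjn, hjt⟩ := hω
      have hNt : t ≤ ((Set.ncard {x : ℝ | x ∈ Set.Ioo (-r) r ∧
          ∑ i ∈ Finset.range (j+1), ξ i ω * x^i = 0}) : ℝ) := hjt
      by_cases hcase : k₀ ≤ j
      · -- main case: apply det
        have hsum : ∑ i ∈ Finset.range (j+1), |ξ i ω| * ((1+r)/2)^i ≤ s := by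
          calc ∑ i ∈ Finset.range (j+1), |ξ i ω| * ((1+r)/2)^i
              ≤ ∑ i ∈ Finset.range (n+1), |ξ i ω| * ((1+r)/2)^i := by
                refine Finset.sum_le_sum_of_subset_of_nonneg
                  (Finset.range_subset_range.mpr (by omega)) fun i _ _ => ?_
                have : (0:ℝ) < (1+r)/2 := by linarith
                positivity
            _ = Sn ω := by
                simp only [hSndef]
                exact Finset.sum_congr rfl fun i _ => by rw [← hρdef]
            _ ≤ s := hSns.le
        have hdet := det r hr0 hr1 (fun i => ξ i ω) j k₀ hcase c₀ hc₀ hk₀big s hsum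
        rw [← hρ₀def, ← hD₀def] at hdet
        set N : ℕ := Set.ncard {x : ℝ | x ∈ Set.Ioo (-r) r ∧
            ∑ i ∈ Finset.range (j+1), ξ i ω * x^i = 0} with hNdef
        -- from hdet : c₀ * ρ₀^k₀ * D₀^N ≤ s = c₀ * exp (ε*t)
        have h1 : ρ₀^m ≤ ρ₀^k₀ := pow_le_pow_of_le_one hρ₀0.le hρ₀1.le hk₀m
        have h2 : c₀ * ρ₀^m * D₀^N ≤ c₀ * Real.exp (ε*t) := by
          calc c₀ * ρ₀^m * D₀^N ≤ c₀ * ρ₀^k₀ * D₀^N :=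
                mul_le_mul_of_nonneg_right
                  (mul_le_mul_of_nonneg_left h1 hc₀.le) (by positivity)
            _ ≤ s := hdet
            _ = c₀ * Real.exp (ε*t) := hsdef
        have h3 : ρ₀^m * D₀^N ≤ Real.exp (ε*t) := by
          rw [mul_assoc] at h2
          exact le_of_mul_le_mul_left h2 hc₀
        have h4 : D₀^N ≤ Real.exp (ε*t) / ρ₀^m := by
          rw [le_div_iff₀ (pow_pos hρ₀0 m), mul_comm]
          exact h3
        have h5 : (N:ℝ) * d ≤ ε*t + m * L₀ := by
          have hlog := Real.log_le_log (by positivity) h4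
          rw [Real.log_pow, Real.log_div (Real.exp_ne_zero _)
            (ne_of_gt (pow_pos hρ₀0 m)), Real.log_exp, Real.log_pow] at hlog
          rw [hL₀def]
          rw [hddef]
          linarith
        have h6 : (N:ℝ) * d ≤ (d/2) * t := by
          have hm1 : (m:ℝ) * L₀ ≤ δ*t*L₀ := mul_le_mul_of_nonneg_right hmle hL₀0.le
          have hm2 : δ*t*L₀ ≤ (d/4)*t := by
            calc δ*t*L₀ = (δ*L₀)*t := by ring
              _ ≤ (d/4)*t := mul_le_mul_of_nonneg_right hδL ht0.le
          rw [hεdef] at h5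
          linarith
        have h7 : (N:ℝ) ≤ t/2 := by
          have hd' : (N:ℝ) ≤ ((d/2)*t)/d := (le_div_iff₀ hd0).mpr (by linarith)
          refine hd'.trans (le_of_eq ?_)
          field_simp
        linarith
      · -- j < k₀ : few roots trivially
        push_neg at hcase
        have hle := ncard_le_deg r hr0 (fun i => ξ i ω) j
        have htj : t ≤ (j:ℝ) := le_trans hNt (by exact_mod_cast hle)
        have hjm : (j:ℝ) < (m:ℝ) := by exact_mod_cast lt_of_lt_of_le hcase hk₀m
        have hδt : δ*t ≤ t/2 := by
          have := mul_le_mul_of_nonneg_right hδhalf ht0.le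
          linarith
        linarith
    -- probability of B₁
    have hPB₁ : ℙ B₁ ≤ ENNReal.ofReal (Real.exp (-cq*t)) := by
      have hprod : ℙ B₁ = ∏ k ∈ Finset.range (m+1), ℙ {ω | |ξ k ω| < c₀} := by
        rw [hB₁def]
        refine hindep.meas_biInter (S := Finset.range (m+1))
          (s := fun k => {ω | |ξ k ω| < c₀}) fun k _ => ?_
        refine ⟨Set.Ioo (-c₀) c₀, measurableSet_Ioo, ?_⟩
        ext ω
        simp [abs_lt, Set.mem_Ioo]
      rw [hprod]
      calc ∏ k ∈ Finset.range (m+1), ℙ {ω | |ξ k ω| < c₀}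
          ≤ ∏ _k ∈ Finset.range (m+1), ENNReal.ofReal q₀ :=
            Finset.prod_le_prod' fun k _ => hsmall k
        _ = ENNReal.ofReal q₀ ^ (m+1) := by
            rw [Finset.prod_const, Finset.card_range]
        _ = ENNReal.ofReal (q₀ ^ (m+1)) := by
            rw [ENNReal.ofReal_pow hq₀0.le]
        _ ≤ ENNReal.ofReal (Real.exp (-cq*t)) := by
            refine ENNReal.ofReal_le_ofReal ?_
            have hq : q₀ ^ (m+1) = Real.exp (((m:ℝ)+1) * Real.log q₀) := by
              rw [show ((m:ℝ)+1) = ((m+1:ℕ):ℝ) by push_cast; ring,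
                Real.exp_nat_mul, Real.exp_log hq₀0]
            rw [hq, Real.exp_le_exp]
            have hδt' : δ*t ≤ (m:ℝ)+1 := hmge.le
            rw [hcqdef]
            have hmm := mul_le_mul_of_nonpos_right hδt' hlogq.le
            nlinarith [hmm]
    -- probability of B₂
    have hPB₂ : ℙ B₂ ≤ ENNReal.ofReal (K₂ * Real.exp (-ε*t)) := by
      have hSnint : Integrable Sn ℙ := by
        rw [hSndef]
        exact integrable_finset_sum _ fun i _ => ((hint i).abs.mul_const _)
      have hSnnn : ∀ ω, 0 ≤ Sn ω := by
        intro ω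
        rw [hSndef]
        exact Finset.sum_nonneg fun i _ => mul_nonneg (abs_nonneg _) (by positivity)
      have hmarkov := mul_meas_ge_le_integral_of_nonneg
        (ae_of_all _ hSnnn) hSnint s
      have hint_le : ∫ ω, Sn ω ∂ℙ ≤ A / (1-ρ) := by
        have hexp : ∫ ω, Sn ω ∂ℙ = ∑ i ∈ Finset.range (n+1), (∫ ω, |ξ i ω| ∂ℙ) * ρ^i := by
          rw [hSndef]
          rw [integral_finset_sum _ fun i _ => ((hint i).abs.mul_const _)]
          exact Finset.sum_congr rfl fun i _ => integral_mul_const _ _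
        rw [hexp]
        have hgeom : ∑ i ∈ Finset.range (n+1), ρ^i ≤ 1/(1-ρ) := by
          have hgs := geom_sum_mul ρ (n+1)
          have hpow : (0:ℝ) ≤ ρ^(n+1) := by positivity
          rw [le_div_iff₀ (by linarith : (0:ℝ) < 1-ρ)]
          nlinarith [hgs, hpow]
        calc ∑ i ∈ Finset.range (n+1), (∫ ω, |ξ i ω| ∂ℙ) * ρ^i
            ≤ ∑ i ∈ Finset.range (n+1), A * ρ^i := by
              refine Finset.sum_le_sum fun i _ => ?_
              exact mul_le_mul_of_nonneg_right (habs i) (by positivity)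
          _ = A * ∑ i ∈ Finset.range (n+1), ρ^i := by rw [Finset.mul_sum]
          _ ≤ A * (1/(1-ρ)) := mul_le_mul_of_nonneg_left hgeom hA0
          _ = A / (1-ρ) := by ring
      have htoReal : (ℙ B₂).toReal ≤ K₂ * Real.exp (-ε*t) := by
        have h1 : s * (ℙ B₂).toReal ≤ A / (1-ρ) := hmarkov.trans hint_le
        have h2 : (ℙ B₂).toReal ≤ (A/(1-ρ))/s := by
          rw [le_div_iff₀ hs0]
          linarith [h1]
        refine h2.trans (le_of_eq ?_)
        rw [hsdef, hK₂def, neg_mul, Real.exp_neg]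
        have hρne : (1:ℝ) - ρ ≠ 0 := ne_of_gt (by linarith)
        field_simp
        try ring
        try simp
      calc ℙ B₂ = ENNReal.ofReal (ℙ B₂).toReal :=
            (ENNReal.ofReal_toReal (measure_ne_top ℙ _)).symm
        _ ≤ ENNReal.ofReal (K₂ * Real.exp (-ε*t)) := ENNReal.ofReal_le_ofReal htoReal
    -- assemble
    calc ℙ {ω | ∃ j : ℕ, j ≤ n ∧ t ≤ (kacRoots ξ j ω (Set.Ioo (-r) r) : ℝ)}
        ≤ ℙ (B₁ ∪ B₂) := measure_mono hsub
      _ ≤ ℙ B₁ + ℙ B₂ := measure_union_le _ _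
      _ ≤ ENNReal.ofReal (Real.exp (-cq*t)) + ENNReal.ofReal (K₂ * Real.exp (-ε*t)) :=
          add_le_add hPB₁ hPB₂
      _ ≤ ENNReal.ofReal ((1 + K₂) * Real.exp (-c₂*t)) := by
          rw [← ENNReal.ofReal_add (by positivity) (by positivity)]
          refine ENNReal.ofReal_le_ofReal ?_
          have e1 : Real.exp (-cq*t) ≤ Real.exp (-c₂*t) := by
            rw [Real.exp_le_exp]
            have hcc : c₂ ≤ cq := by rw [hc₂def]; exact min_le_left _ _
            have h := mul_le_mul_of_nonneg_right hcc ht0.le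
            linarith
          have e2 : Real.exp (-ε*t) ≤ Real.exp (-c₂*t) := by
            rw [Real.exp_le_exp]
            have hcc : c₂ ≤ ε := by rw [hc₂def]; exact min_le_right _ _
            have h := mul_le_mul_of_nonneg_right hcc ht0.le
            linarith
          have e3 : K₂ * Real.exp (-ε*t) ≤ K₂ * Real.exp (-c₂*t) :=
            mul_le_mul_of_nonneg_left e2 hK₂0
          calc Real.exp (-cq*t) + K₂ * Real.exp (-ε*t)
              ≤ Real.exp (-c₂*t) + K₂ * Real.exp (-c₂*t) := add_le_add e1 e3
            _ = (1 + K₂) * Real.exp (-c₂*t) := by ring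
end

section
/- Let (X_n)_{n≥1} be a sequence of real-valued random variables on a probability space, and assume that for every ε > 0 there exist constants C₀ > 0, C₁ > 1, and K < ∞ such that for every integer n ≥ 2, P( max over integers j with n ≤ j ≤ C₁·n of |X_j| ≥ ε ) ≤ K·(log n)^{−(2+C₀)}. Then almost surely lim_{n→∞} X_n = 0. -/
/-!
Along the geometric sequence `a k = ⌈C₁ ^ (k + 1)⌉₊` we have `log (a k) ≥ (k + 1) log C₁`, so
the hypothesis bounds the probability of the `k`-th block event
`{∃ j ∈ [a k, C₁ a k], ε ≤ |X j|}` by a constant times `(k + 1) ^ (-(2 + C₀))`, which is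
summable. By Borel–Cantelli almost every `ω` lies in only finitely many block events, and since
the blocks `[a k, C₁ a k]` cover every large integer, `|X n ω| < ε` eventually. Intersecting
over `ε = 1 / (m + 1)` gives the theorem.
-/

open MeasureTheory ProbabilityTheory Filter

lemma Nat.exists_le_lt_succ_of_tendsto_atTop {a : ℕ → ℕ} (ha : Tendsto a atTop atTop)
    {n k₀ : ℕ} (hn : a k₀ ≤ n) : ∃ k ≥ k₀, a k ≤ n ∧ n < a (k + 1) := by
  by_contra! H
  have hle : ∀ i, a (k₀ + i) ≤ n := by
    intro i
    induction i with
    | zero => exact hn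
    | succ i ih => exact H (k₀ + i) (by omega) ih
  obtain ⟨i, hi⟩ := ((ha.comp (tendsto_add_atTop_nat k₀)).eventually_gt_atTop n).exists
  exact (hle i).not_gt (by rwa [Function.comp_apply, add_comm] at hi)

section GeometricBlocks

variable {C : ℝ} (hC : 1 < C)
include hC

lemma tendsto_ceil_pow_succ_atTop : Tendsto (fun k : ℕ => ⌈C ^ (k + 1)⌉₊) atTop atTop :=
  tendsto_nat_ceil_atTop.comp
    ((tendsto_pow_atTop_atTop_of_one_lt hC).comp (tendsto_add_atTop_nat 1))

lemma two_le_ceil_pow_succ (k : ℕ) : 2 ≤ ⌈C ^ (k + 1)⌉₊ :=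
  Nat.lt_ceil.2 (by exact_mod_cast one_lt_pow₀ hC k.succ_ne_zero)

lemma mul_log_le_log_ceil_pow_succ (k : ℕ) :
    ((k : ℝ) + 1) * Real.log C ≤ Real.log ⌈C ^ (k + 1)⌉₊ := by
  have h := Real.log_le_log (pow_pos (zero_lt_one.trans hC) _) (Nat.le_ceil (C ^ (k + 1)))
  rwa [Real.log_pow, Nat.cast_succ] at h

lemma log_ceil_pow_succ_pos (k : ℕ) : 0 < Real.log ⌈C ^ (k + 1)⌉₊ :=
  (mul_pos k.cast_add_one_pos (Real.log_pos hC)).trans_le (mul_log_le_log_ceil_pow_succ hC k)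

lemma eventually_of_eventually_forall_mem_block {P : ℕ → Prop}
    (hP : ∀ᶠ k in atTop, ∀ j : ℕ,
      ⌈C ^ (k + 1)⌉₊ ≤ j → (j : ℝ) ≤ C * ⌈C ^ (k + 1)⌉₊ → P j) :
    ∀ᶠ n in atTop, P n := by
  obtain ⟨k₀, hk₀⟩ := eventually_atTop.1 hP
  filter_upwards [eventually_ge_atTop ⌈C ^ (k₀ + 1)⌉₊] with n hn
  obtain ⟨k, hk, hkn, hnk⟩ := Nat.exists_le_lt_succ_of_tendsto_atTop
    (tendsto_ceil_pow_succ_atTop hC) hn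
  refine hk₀ k hk n hkn ?_
  calc (n : ℝ) ≤ C ^ (k + 1 + 1) := (Nat.lt_ceil.1 hnk).le
    _ = C * C ^ (k + 1) := pow_succ' C (k + 1)
    _ ≤ C * ⌈C ^ (k + 1)⌉₊ := by gcongr; exact Nat.le_ceil _

lemma summable_log_ceil_pow_succ_rpow_neg {p : ℝ} (hp : 1 < p) :
    Summable fun k : ℕ => Real.log ⌈C ^ (k + 1)⌉₊ ^ (-p) := by
  have hlogC := Real.log_pos hC
  have hshift : Summable fun k : ℕ => ((k : ℝ) + 1) ^ (-p) := by
    have := (summable_nat_add_iff 1).2 (Real.summable_nat_rpow.2 (neg_lt_neg hp))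
    exact_mod_cast this
  have hmajorant : Summable fun k : ℕ => (((k : ℝ) + 1) * Real.log C) ^ (-p) := by
    refine (hshift.mul_right (Real.log C ^ (-p))).congr fun k => ?_
    rw [Real.mul_rpow (by positivity) hlogC.le]
  refine hmajorant.of_nonneg_of_le
    (fun k => (Real.rpow_pos_of_pos (log_ceil_pow_succ_pos hC k) _).le) fun k =>
      Real.rpow_le_rpow_of_nonpos (by positivity) (mul_log_le_log_ceil_pow_succ hC k)
        (by linarith)

end GeometricBlocks

lemma ae_eventually_abs_lt_of_measure_block_le {Ω : Type*} [MeasurableSpace Ω]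
    {μ : Measure Ω} {X : ℕ → Ω → ℝ} {ε C₀ C₁ K : ℝ} (hC₀ : 0 < C₀) (hC₁ : 1 < C₁)
    (hK : ∀ n : ℕ, 2 ≤ n → μ {ω | ∃ j : ℕ, n ≤ j ∧ (j : ℝ) ≤ C₁ * n ∧ ε ≤ |X j ω|}
        ≤ ENNReal.ofReal (K * Real.log n ^ (-(2 + C₀)))) :
    ∀ᵐ ω ∂μ, ∀ᶠ n in atTop, |X n ω| < ε := by
  set a : ℕ → ℕ := fun k => ⌈C₁ ^ (k + 1)⌉₊
  set E : ℕ → Set Ω := fun k => {ω | ∃ j : ℕ, a k ≤ j ∧ (j : ℝ) ≤ C₁ * a k ∧ ε ≤ |X j ω|}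
  have hlog_nonneg (k : ℕ) : 0 ≤ Real.log (a k) ^ (-(2 + C₀)) :=
    (Real.rpow_pos_of_pos (log_ceil_pow_succ_pos hC₁ k) _).le
  have hsum : ∑' k, μ (E k) ≠ ⊤ := by
    refine ne_top_of_le_ne_top ?_
      (ENNReal.tsum_le_tsum fun k => hK (a k) (two_le_ceil_pow_succ hC₁ k))
    simp_rw [ENNReal.ofReal_mul' (hlog_nonneg _), ENNReal.tsum_mul_left]
    rw [← ENNReal.ofReal_tsum_of_nonneg hlog_nonneg
      (summable_log_ceil_pow_succ_rpow_neg hC₁ (by linarith))]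
    exact ENNReal.mul_ne_top ENNReal.ofReal_ne_top ENNReal.ofReal_ne_top
  filter_upwards [ae_eventually_notMem hsum] with ω hω
  exact eventually_of_eventually_forall_mem_block hC₁ <| hω.mono fun k hk j hj hjC =>
    not_le.1 fun hεj => hk ⟨j, hj, hjC, hεj⟩

lemma ae_tendsto_zero_of_forall_ae_eventually_abs_lt {Ω : Type*} [MeasurableSpace Ω]
    {μ : Measure Ω} {X : ℕ → Ω → ℝ}
    (h : ∀ ε : ℝ, 0 < ε → ∀ᵐ ω ∂μ, ∀ᶠ n in atTop, |X n ω| < ε) :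
    ∀ᵐ ω ∂μ, Tendsto (fun n => X n ω) atTop (nhds 0) := by
  have hall := ae_all_iff.2 fun m : ℕ => h (1 / ((m : ℝ) + 1)) Nat.one_div_pos_of_nat
  filter_upwards [hall] with ω hω
  refine Metric.tendsto_atTop.2 fun ε hε => ?_
  obtain ⟨m, hm⟩ := exists_nat_one_div_lt hε
  obtain ⟨N, hN⟩ := eventually_atTop.1 (hω m)
  exact ⟨N, fun n hn => by rw [Real.dist_eq, sub_zero]; exact (hN n hn).trans hm⟩

theorem stmt_11_general {Ω : Type*} [MeasureSpace Ω]
    (X : ℕ → Ω → ℝ)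
    (h : ∀ ε : ℝ, 0 < ε → ∃ C₀ > (0 : ℝ), ∃ C₁ > (1 : ℝ), ∃ K : ℝ, ∀ n : ℕ, 2 ≤ n →
      ℙ {ω | ∃ j : ℕ, n ≤ j ∧ (j : ℝ) ≤ C₁ * n ∧ ε ≤ |X j ω|}
        ≤ ENNReal.ofReal (K * Real.log n ^ (-(2 + C₀)))) :
    ∀ᵐ ω ∂(ℙ : Measure Ω), Tendsto (fun n : ℕ => X n ω) atTop (nhds 0) := by
  refine ae_tendsto_zero_of_forall_ae_eventually_abs_lt fun ε hε => ?_
  obtain ⟨C₀, hC₀, C₁, hC₁, K, hK⟩ := h ε hε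
  exact ae_eventually_abs_lt_of_measure_block_le hC₀ hC₁ hK

theorem stmt_11 {Ω : Type*} [MeasureSpace Ω] [IsProbabilityMeasure (ℙ : Measure Ω)]
    (X : ℕ → Ω → ℝ) (hmeas : ∀ n, Measurable (X n))
    (h : ∀ ε : ℝ, 0 < ε → ∃ C₀ > (0 : ℝ), ∃ C₁ > (1 : ℝ), ∃ K : ℝ, ∀ n : ℕ, 2 ≤ n →
      ℙ {ω | ∃ j : ℕ, n ≤ j ∧ (j : ℝ) ≤ C₁ * n ∧ ε ≤ |X j ω|}
        ≤ ENNReal.ofReal (K * Real.log n ^ (-(2 + C₀)))) :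
    ∀ᵐ ω ∂(ℙ : Measure Ω), Tendsto (fun n : ℕ => X n ω) atTop (nhds 0) :=
  stmt_11_general X h
end

section
/- Assume the ξ_j are independent, E[ξ_j] = 0 and E[ξ_j²] = 1 for every j. Then there is an absolute constant C > 0 such that for all integers 1 ≤ k ≤ n and all reals 0 ≤ x ≤ y ≤ 1, the iterated integral J_k := ∫_x^y ∫_{x_1}^y ⋯ ∫_{x_{k-1}}^y E[ |p_n^{(k)}(x_k)|² ] dx_k ⋯ dx_1 (equivalently, the integral of E[|p_n^{(k)}(x_k)|²] over the simplex {(x_1,…,x_k) : x ≤ x_1 ≤ x_2 ≤ ⋯ ≤ x_k ≤ y}) satisfies J_k ≤ C·n^{2k+1}·(1 − x)^k / k!. -/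
open MeasureTheory ProbabilityTheory Filter

lemma myIteratedDeriv_const_mul (k : ℕ) (c : ℝ) {f : ℝ → ℝ} (h : ContDiff ℝ k f) (t : ℝ) :
    iteratedDeriv k (fun x => c * f x) t = c * iteratedDeriv k f t := by
  simp only [← iteratedDerivWithin_univ]
  exact iteratedDerivWithin_const_mul (Set.mem_univ t) uniqueDiffOn_univ c h.contDiffWithinAt

lemma myIteratedDeriv_sum {ι : Type*} (k : ℕ) (s : Finset ι) (f : ι → ℝ → ℝ)
    (h : ∀ j ∈ s, ContDiff ℝ k (f j)) (t : ℝ) :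
    iteratedDeriv k (fun x => ∑ j ∈ s, f j x) t = ∑ j ∈ s, iteratedDeriv k (f j) t := by
  simp only [iteratedDeriv_eq_iteratedFDeriv]
  rw [iteratedFDeriv_sum h]
  simp [ContinuousMultilinearMap.sum_apply]

lemma myIter_pow (k : ℕ) : ∀ (j : ℕ) (t : ℝ),
    iteratedDeriv k (fun x : ℝ => x ^ j) t = (j.descFactorial k : ℝ) * t ^ (j - k) := by
  induction k with
  | zero => intro j t; simp
  | succ k ih =>
    intro j t
    rw [iteratedDeriv_succ']
    have hd : deriv (fun x : ℝ => x ^ j) = fun x => (j : ℝ) * x ^ (j - 1) :=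
      funext fun x => deriv_pow_field j
    rw [hd, myIteratedDeriv_const_mul k _ (by fun_prop : ContDiff ℝ (k:ℕ∞) (fun x : ℝ => x ^ (j-1))), ih (j-1) t]
    cases j with
    | zero => simp
    | succ m =>
      rw [Nat.succ_descFactorial_succ]
      have h2 : m + 1 - 1 - k = m + 1 - (k + 1) := by omega
      rw [h2]
      push_cast
      ring

lemma myKac_deriv {Ω : Type*} (ξ : ℕ → Ω → ℝ) (n : ℕ) (ω : Ω) (k : ℕ) (t : ℝ) :
    iteratedDeriv k (kacPoly ξ n ω) t
      = ∑ j ∈ Finset.range (n + 1), ((j.descFactorial k : ℝ) * t ^ (j - k)) * ξ j ω := by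
  have h1 : kacPoly ξ n ω = fun x => ∑ j ∈ Finset.range (n + 1), ξ j ω * x ^ j := rfl
  rw [h1, myIteratedDeriv_sum k _ _ (fun j _ => by fun_prop)]
  refine Finset.sum_congr rfl fun j _ => ?_
  rw [myIteratedDeriv_const_mul k _ (by fun_prop : ContDiff ℝ (k:ℕ∞) (fun x : ℝ => x ^ j)),
    myIter_pow k j t]
  ring

section Moment
variable {Ω : Type*} [MeasureSpace Ω] [IsProbabilityMeasure (ℙ : Measure Ω)]
  (ξ : ℕ → Ω → ℝ) (hmeas : ∀ j, Measurable (ξ j))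
  (hindep : iIndepFun ξ ℙ)
  (hmean : ∀ j, ∫ ω, ξ j ω ∂ℙ = 0)
  (hvar : ∀ j, ∫ ω, (ξ j ω) ^ 2 ∂ℙ = 1)

include hmeas hindep hmean hvar in
lemma mySecondMoment (a : ℕ → ℝ) (s : Finset ℕ) :
    ∫ ω, (∑ j ∈ s, a j * ξ j ω) ^ 2 ∂ℙ = ∑ j ∈ s, (a j) ^ 2 := by
  have hL2 : ∀ j, Integrable (fun ω => ξ j ω ^ 2) ℙ := by
    intro j
    by_contra h
    have := hvar j
    rw [integral_undef h] at this
    exact zero_ne_one this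
  have hInt : ∀ j, Integrable (ξ j) ℙ := fun j =>
    ((memLp_two_iff_integrable_sq (hmeas j).aestronglyMeasurable).2 (hL2 j)).integrable
      (by norm_num)
  have hmul : ∀ i j, Integrable (fun ω => ξ i ω * ξ j ω) ℙ := by
    intro i j
    rcases eq_or_ne i j with rfl | hij
    · simpa [pow_two] using hL2 i
    · exact (hindep.indepFun hij).integrable_mul (hInt i) (hInt j)
  have hmul0 : ∀ i j, i ≠ j → ∫ ω, ξ i ω * ξ j ω ∂ℙ = 0 := by
    intro i j hij
    have := (hindep.indepFun hij).integral_mul_eq_mul_integral (hmeas i).aestronglyMeasurable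
      (hmeas j).aestronglyMeasurable
    simp only [Pi.mul_apply] at this
    rw [this, hmean i, hmean j, mul_zero]
  have expand : ∀ ω, (∑ j ∈ s, a j * ξ j ω) ^ 2
      = ∑ i ∈ s, ∑ j ∈ s, (a i * a j) * (ξ i ω * ξ j ω) := by
    intro ω
    rw [pow_two, Finset.sum_mul_sum]
    exact Finset.sum_congr rfl fun i _ => Finset.sum_congr rfl fun j _ => by ring
  simp only [expand]
  rw [integral_finset_sum _ (fun i _ => integrable_finset_sum _
    (fun j _ => (hmul i j).const_mul _))]
  have : ∀ i ∈ s, (∫ ω, ∑ j ∈ s, (a i * a j) * (ξ i ω * ξ j ω) ∂ℙ) = (a i) ^ 2 := by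
    intro i hi
    rw [integral_finset_sum _ (fun j _ => (hmul i j).const_mul _)]
    have hterm : ∀ j ∈ s, (∫ ω, (a i * a j) * (ξ i ω * ξ j ω) ∂ℙ)
        = if j = i then (a i) ^ 2 else 0 := by
      intro j hj
      rw [integral_const_mul]
      rcases eq_or_ne j i with rfl | hij
      · simp only [if_pos rfl]
        have : (∫ ω, ξ j ω * ξ j ω ∂ℙ) = 1 := by
          simpa [pow_two] using hvar j
        rw [this]; simp; ring
      · rw [if_neg hij, hmul0 i j (Ne.symm hij), mul_zero]
    rw [Finset.sum_congr rfl hterm, Finset.sum_ite_eq' s i (fun _ => (a i)^2), if_pos hi]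
  rw [Finset.sum_congr rfl this]

end Moment

lemma myHyperplaneNull (k : ℕ) (i j : Fin k) (hij : i ≠ j) :
    (volume : Measure (Fin k → ℝ)) {u | u i = u j} = 0 := by
  cases k with
  | zero => exact i.elim0
  | succ m =>
    obtain ⟨l, hl⟩ := Fin.exists_succAbove_eq (Ne.symm hij)
    set e := MeasurableEquiv.piFinSuccAbove (fun _ : Fin (m+1) => ℝ) i
    have hset : {u : Fin (m+1) → ℝ | u i = u j}
        = e ⁻¹' {p : ℝ × (Fin m → ℝ) | p.1 = p.2 l} := by
      ext u
      simp only [Set.mem_setOf_eq, Set.mem_preimage]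
      constructor
      · intro h; show u i = u (i.succAbove l); rw [hl]; exact h
      · intro h; have : u i = u (i.succAbove l) := h; rwa [hl] at this
    have hms : MeasurableSet {p : ℝ × (Fin m → ℝ) | p.1 = p.2 l} :=
      measurableSet_eq_fun measurable_fst (measurable_snd.eval)
    rw [hset, volume_pi,
      (measurePreserving_piFinSuccAbove (fun _ : Fin (m+1) => volume) i).measure_preimage
        hms.nullMeasurableSet]
    rw [Measure.prod_apply hms]
    have : ∀ a : ℝ, (Measure.pi fun _ : Fin m => volume) (Prod.mk a ⁻¹' {p : ℝ × (Fin m → ℝ) | p.1 = p.2 l}) = 0 := by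
      intro a
      have : (Prod.mk a ⁻¹' {p : ℝ × (Fin m → ℝ) | p.1 = p.2 l}) = {v : Fin m → ℝ | v l = a} := by
        ext v; simp [eq_comm]
      rw [this]
      exact Measure.pi_hyperplane (fun _ : Fin m => (volume : Measure ℝ)) l a
    have h2 : ∀ a : ℝ, (Measure.pi fun _ : Fin m => (volume : Measure ℝ)) {v : Fin m → ℝ | a = v l} = 0 := by
      intro a
      have hs : {v : Fin m → ℝ | a = v l} = {v : Fin m → ℝ | v l = a} := by
        ext v; simp [eq_comm]
      rw [hs]
      exact Measure.pi_hyperplane (fun _ : Fin m => (volume : Measure ℝ)) l a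
    calc (∫⁻ x : ℝ, (Measure.pi fun _ : Fin m => (volume : Measure ℝ))
            (Prod.mk x ⁻¹' {p : ℝ × (Fin m → ℝ) | p.1 = p.2 l}))
        = ∫⁻ _ : ℝ, 0 := by simp only [this]
      _ = 0 := lintegral_zero

lemma myStrictMonoMeasurable (k : ℕ) : MeasurableSet {v : Fin k → ℝ | StrictMono v} := by
  have h : {v : Fin k → ℝ | StrictMono v}
      = ⋂ p : Fin k × Fin k, {v | p.1 < p.2 → v p.1 < v p.2} := by
    ext v
    simp only [Set.mem_setOf_eq, Set.mem_iInter, StrictMono]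
    exact ⟨fun h p => fun hp => h hp, fun h a b hab => h (a, b) hab⟩
  rw [h]
  refine MeasurableSet.iInter fun p => ?_
  by_cases hp : p.1 < p.2
  · simp only [hp, forall_true_left]
    exact measurableSet_lt (measurable_pi_apply _) (measurable_pi_apply _)
  · simp only [hp, IsEmpty.forall_iff]
    exact MeasurableSet.univ

lemma myPermPreserving (k : ℕ) (σ : Equiv.Perm (Fin k)) :
    MeasurePreserving (fun u : Fin k → ℝ => u ∘ ⇑σ) volume volume := by
  have h := volume_measurePreserving_piCongrLeft (fun _ : Fin k => ℝ) σ.symm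
  have heq : (fun u : Fin k → ℝ => u ∘ ⇑σ)
      = ⇑(MeasurableEquiv.piCongrLeft (fun _ : Fin k => ℝ) σ.symm) := by
    funext u
    funext b
    show u (σ b) = (Equiv.piCongrLeft (fun _ : Fin k => ℝ) σ.symm) u b
    have := Equiv.piCongrLeft_apply_apply (fun _ : Fin k => ℝ) σ.symm u (σ b)
    simpa using this.symm
  rw [heq]
  exact h

lemma mySimplexVol (k : ℕ) (hk : 1 ≤ k) (x y : ℝ) (hxy : x ≤ y) :
    (volume : Measure (Fin k → ℝ))
        {u | Monotone u ∧ x ≤ u ⟨0, hk⟩ ∧ u ⟨k - 1, Nat.sub_lt hk Nat.one_pos⟩ ≤ y}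
      ≤ ENNReal.ofReal ((y - x) ^ k) / (k.factorial : ENNReal) := by
  set T : Set (Fin k → ℝ) := Set.pi Set.univ (fun _ => Set.Icc x y) with hT
  set strictS : Set (Fin k → ℝ) := {v | StrictMono v} ∩ T with hstrictS
  have hTmeas : MeasurableSet T := MeasurableSet.univ_pi fun _ => measurableSet_Icc
  have hstrictMeas : MeasurableSet strictS := (myStrictMonoMeasurable k).inter hTmeas
  set A : Equiv.Perm (Fin k) → Set (Fin k → ℝ) :=
    fun σ => (fun u : Fin k → ℝ => u ∘ ⇑σ) ⁻¹' strictS with hA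
  have hAmeas : ∀ σ, MeasurableSet (A σ) :=
    fun σ => (myPermPreserving k σ).measurable hstrictMeas
  have hAvol : ∀ σ, volume (A σ) = volume strictS :=
    fun σ => (myPermPreserving k σ).measure_preimage hstrictMeas.nullMeasurableSet
  have hAsubT : ∀ σ, A σ ⊆ T := by
    intro σ u hu
    have h2 : ∀ i, (u ∘ ⇑σ) i ∈ Set.Icc x y := fun i => hu.2 i (Set.mem_univ i)
    intro i _
    have := h2 (σ.symm i)
    simpa using this
  have hdisj : Pairwise (Function.onFun Disjoint A) := by
    intro σ τ hστ
    rw [Function.onFun, Set.disjoint_left]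
    rintro u ⟨huσ, -⟩ ⟨huτ, -⟩
    have huσ : StrictMono (u ∘ ⇑σ) := huσ
    have huτ : StrictMono (u ∘ ⇑τ) := huτ
    have hrange : Set.range (u ∘ ⇑σ) = Set.range (u ∘ ⇑τ) := by
      rw [Set.range_comp, Set.range_comp]
      simp [Equiv.range_eq_univ]
    have heq : u ∘ ⇑σ = u ∘ ⇑τ := (@StrictMono.range_inj (Fin k) ℝ _ _ (inferInstance : WellFoundedLT (Fin k)) _ _ huσ huτ).1 hrange
    have huinj : Function.Injective u := by
      have h1 : Function.Injective (u ∘ ⇑σ) := huσ.injective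
      intro a b hab
      have : (u ∘ ⇑σ) (σ.symm a) = (u ∘ ⇑σ) (σ.symm b) := by simpa using hab
      have := h1 this
      simpa using this
    exact hστ (Equiv.ext fun b => huinj (congr_fun heq b))
  -- k! * vol strictS ≤ vol T
  have hsum : (k.factorial : ENNReal) * volume strictS ≤ volume T := by
    have h1 : volume (⋃ σ, A σ) = ∑' σ : Equiv.Perm (Fin k), volume (A σ) :=
      measure_iUnion hdisj hAmeas
    have h2 : (∑' σ : Equiv.Perm (Fin k), volume (A σ))
        = (k.factorial : ENNReal) * volume strictS := by
      simp only [hAvol]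
      rw [tsum_eq_sum (s := Finset.univ) (by simp), Finset.sum_const, Finset.card_univ,
        Fintype.card_perm, Fintype.card_fin, nsmul_eq_mul]
    calc (k.factorial : ENNReal) * volume strictS = volume (⋃ σ, A σ) := by rw [h1, h2]
      _ ≤ volume T := measure_mono (Set.iUnion_subset hAsubT)
  have hTvol : volume T = ENNReal.ofReal ((y - x) ^ k) := by
    rw [hT, volume_pi_pi]
    simp [Real.volume_Icc, ENNReal.ofReal_pow (by linarith : (0:ℝ) ≤ y - x)]
  -- S is a.e. contained in strictS
  set N : Set (Fin k → ℝ) :=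
    ⋃ p : Fin k × Fin k, ⋃ (_ : p.1 ≠ p.2), {u | u p.1 = u p.2} with hN
  have hNnull : volume N = 0 :=
    measure_iUnion_null fun p => measure_iUnion_null fun hp => myHyperplaneNull k p.1 p.2 hp
  have hsub : {u : Fin k → ℝ | Monotone u ∧ x ≤ u ⟨0, hk⟩ ∧ u ⟨k - 1, Nat.sub_lt hk Nat.one_pos⟩ ≤ y}
      ⊆ strictS ∪ N := by
    rintro u ⟨hmono, hx0, hxk⟩
    have hicc : ∀ i, u i ∈ Set.Icc x y := by
      intro i
      constructor
      · exact le_trans hx0 (hmono (by simp [Fin.le_def]))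
      · exact le_trans (hmono (by simp [Fin.le_def]; omega)) hxk
    by_cases hs : StrictMono u
    · exact Or.inl ⟨hs, fun i _ => hicc i⟩
    · right
      simp only [StrictMono, not_forall] at hs
      obtain ⟨a, b, hab, hnab⟩ := hs
      have : u a = u b := le_antisymm (hmono hab.le) (not_lt.1 hnab)
      refine Set.mem_iUnion.2 ⟨(a, b), Set.mem_iUnion.2 ⟨hab.ne, this⟩⟩
  calc volume {u : Fin k → ℝ | Monotone u ∧ x ≤ u ⟨0, hk⟩ ∧ u ⟨k - 1, Nat.sub_lt hk Nat.one_pos⟩ ≤ y}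
      ≤ volume (strictS ∪ N) := measure_mono hsub
    _ ≤ volume strictS + volume N := measure_union_le _ _
    _ = volume strictS := by rw [hNnull, add_zero]
    _ ≤ ENNReal.ofReal ((y - x) ^ k) / (k.factorial : ENNReal) := by
        rw [ENNReal.le_div_iff_mul_le (Or.inl (by simp [Nat.factorial_ne_zero]))
          (Or.inl (by simp))]
        rw [mul_comm]
        rw [← hTvol]
        exact hsum

theorem stmt_13 {Ω : Type*} [MeasureSpace Ω] [IsProbabilityMeasure (ℙ : Measure Ω)]
    (ξ : ℕ → Ω → ℝ) (hmeas : ∀ j, Measurable (ξ j))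
    (hindep : iIndepFun ξ ℙ)
    (hmean : ∀ j, ∫ ω, ξ j ω ∂ℙ = 0)
    (hvar : ∀ j, ∫ ω, (ξ j ω) ^ 2 ∂ℙ = 1) :
    ∃ C > (0 : ℝ), ∀ n k : ℕ, ∀ hk : 1 ≤ k, k ≤ n → ∀ x y : ℝ, 0 ≤ x → x ≤ y → y ≤ 1 →
      -- the integral of E[|p_n^{(k)}(x_k)|²] over the simplex x ≤ x_1 ≤ ⋯ ≤ x_k ≤ y,
      -- parametrized by monotone u : Fin k → ℝ with u (k-1) = x_k the innermost variable
      (∫ u in {u : Fin k → ℝ | Monotone u ∧ x ≤ u ⟨0, by omega⟩ ∧ u ⟨k - 1, by omega⟩ ≤ y},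
          ∫ ω, |iteratedDeriv k (kacPoly ξ n ω) (u ⟨k - 1, by omega⟩)| ^ 2 ∂ℙ)
        ≤ C * (n : ℝ) ^ (2 * k + 1) * (1 - x) ^ k / (k.factorial : ℝ) := by
  refine ⟨1, one_pos, ?_⟩
  intro n k hk hkn x y hx hxy hy1
  set M : ℝ := (n : ℝ) ^ (2 * k + 1) with hM
  have hM0 : 0 ≤ M := by positivity
  set F : ℝ → ℝ := fun t => ∑ j ∈ Finset.range (n + 1),
    ((j.descFactorial k : ℝ) * t ^ (j - k)) ^ 2 with hF
  have hinner : ∀ t : ℝ, (∫ ω, |iteratedDeriv k (kacPoly ξ n ω) t| ^ 2 ∂ℙ) = F t := by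
    intro t
    have h1 : ∀ ω, |iteratedDeriv k (kacPoly ξ n ω) t| ^ 2
        = (∑ j ∈ Finset.range (n + 1), ((j.descFactorial k : ℝ) * t ^ (j - k)) * ξ j ω) ^ 2 := by
      intro ω; rw [sq_abs, myKac_deriv]
    simp only [h1]
    exact mySecondMoment ξ hmeas hindep hmean hvar _ _
  have hF0 : ∀ t, 0 ≤ F t := fun t => Finset.sum_nonneg fun j _ => sq_nonneg _
  have hFle : ∀ t, 0 ≤ t → t ≤ 1 → F t ≤ M := by
    intro t ht0 ht1
    have hsub : Finset.Ico k (n + 1) ⊆ Finset.range (n + 1) := by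
      intro j hj
      simp only [Finset.mem_Ico] at hj
      simp only [Finset.mem_range]
      omega
    have hzero : ∀ j ∈ Finset.range (n + 1), j ∉ Finset.Ico k (n + 1) →
        ((j.descFactorial k : ℝ) * t ^ (j - k)) ^ 2 = 0 := by
      intro j hj hj2
      simp only [Finset.mem_range] at hj
      simp only [Finset.mem_Ico, not_and, not_lt] at hj2
      have : j < k := by omega
      rw [Nat.descFactorial_eq_zero_iff_lt.2 this]
      simp
    have heq : F t = ∑ j ∈ Finset.Ico k (n + 1),
        ((j.descFactorial k : ℝ) * t ^ (j - k)) ^ 2 :=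
      (Finset.sum_subset hsub hzero).symm
    have hbound : ∀ j ∈ Finset.Ico k (n + 1),
        ((j.descFactorial k : ℝ) * t ^ (j - k)) ^ 2 ≤ ((n : ℝ) ^ k) ^ 2 := by
      intro j hj
      simp only [Finset.mem_Ico] at hj
      have h1 : (0 : ℝ) ≤ (j.descFactorial k : ℝ) * t ^ (j - k) :=
        mul_nonneg (Nat.cast_nonneg _) (pow_nonneg ht0 _)
      have h2 : (j.descFactorial k : ℝ) * t ^ (j - k) ≤ (n : ℝ) ^ k := by
        have hd : (j.descFactorial k : ℝ) ≤ (n : ℝ) ^ k := by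
          have := (Nat.descFactorial_le_pow j k).trans (Nat.pow_le_pow_left (show j ≤ n by omega) k)
          exact_mod_cast this
        have ht : t ^ (j - k) ≤ 1 := pow_le_one₀ ht0 ht1
        calc (j.descFactorial k : ℝ) * t ^ (j - k) ≤ (n : ℝ) ^ k * 1 :=
              mul_le_mul hd ht (pow_nonneg ht0 _) (by positivity)
          _ = (n : ℝ) ^ k := mul_one _
      exact pow_le_pow_left₀ h1 h2 2
    calc F t ≤ (Finset.Ico k (n + 1)).card • ((n : ℝ) ^ k) ^ 2 := by
          rw [heq]; exact Finset.sum_le_card_nsmul _ _ _ hbound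
      _ = ((n + 1 - k : ℕ) : ℝ) * ((n : ℝ) ^ k) ^ 2 := by
          rw [Nat.card_Ico, nsmul_eq_mul]
      _ ≤ (n : ℝ) * ((n : ℝ) ^ k) ^ 2 := by
          have : ((n + 1 - k : ℕ) : ℝ) ≤ (n : ℝ) := by
            have : n + 1 - k ≤ n := by omega
            exact_mod_cast this
          exact mul_le_mul_of_nonneg_right this (by positivity)
      _ = M := by rw [hM, ← pow_mul]; ring
  set S : Set (Fin k → ℝ) :=
    {u : Fin k → ℝ | Monotone u ∧ x ≤ u ⟨0, by omega⟩ ∧ u ⟨k - 1, by omega⟩ ≤ y} with hS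
  have hvolS : volume S ≤ ENNReal.ofReal ((y - x) ^ k / (k.factorial : ℝ)) := by
    have h1 := mySimplexVol k hk x y hxy
    have h2 : ENNReal.ofReal ((y - x) ^ k) / (k.factorial : ENNReal)
        = ENNReal.ofReal ((y - x) ^ k / (k.factorial : ℝ)) := by
      rw [ENNReal.ofReal_div_of_pos (by positivity), ENNReal.ofReal_natCast]
    exact h2 ▸ h1
  have hvolS_lt : volume S < ⊤ := lt_of_le_of_lt hvolS ENNReal.ofReal_lt_top
  have hvolS_toReal : (volume S).toReal ≤ (y - x) ^ k / (k.factorial : ℝ) := by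
    refine ENNReal.toReal_le_of_le_ofReal ?_ hvolS
    have : (0 : ℝ) ≤ (y - x) ^ k := pow_nonneg (by linarith) k
    positivity
  have key : ‖∫ u in S, F (u ⟨k - 1, by omega⟩)‖ ≤ M * (volume S).toReal := by
    refine norm_setIntegral_le_of_norm_le_const hvolS_lt ?_
    · rintro u ⟨hmono, hx0, hxk⟩
      have ht0 : 0 ≤ u ⟨k - 1, by omega⟩ := by
        have : u ⟨0, by omega⟩ ≤ u ⟨k - 1, by omega⟩ := hmono (by simp [Fin.le_def])
        linarith
      have ht1 : u ⟨k - 1, by omega⟩ ≤ 1 := by linarith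
      rw [Real.norm_eq_abs, abs_of_nonneg (hF0 _)]
      exact hFle _ ht0 ht1
  calc (∫ u in S, ∫ ω, |iteratedDeriv k (kacPoly ξ n ω) (u ⟨k - 1, by omega⟩)| ^ 2 ∂ℙ)
      = ∫ u in S, F (u ⟨k - 1, by omega⟩) := by simp only [hinner]
    _ ≤ ‖∫ u in S, F (u ⟨k - 1, by omega⟩)‖ := le_abs_self _
    _ ≤ M * (volume S).toReal := key
    _ ≤ M * ((y - x) ^ k / (k.factorial : ℝ)) :=
        mul_le_mul_of_nonneg_left hvolS_toReal hM0
    _ ≤ 1 * M * (1 - x) ^ k / (k.factorial : ℝ) := by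
        rw [one_mul, mul_div_assoc]
        refine mul_le_mul_of_nonneg_left ?_ hM0
        refine div_le_div_of_nonneg_right ?_ (by positivity)
        exact pow_le_pow_left₀ (by linarith) (by linarith) k
end

section
/- Let B, K, D, A be positive constants. Then there exist a constant M > 0 (depending only on B, K, D, A) and a constant C ∈ ℕ such that the following holds for every integer n ≥ 2: if I ⊆ [−1,1] is an interval, f is a real polynomial with deg f ≤ D·n whose coefficients all have absolute value at most A·n^K, such that max(|f(x)|, |f'(x)|) ≥ n^{−B} for every x ∈ I, and g : I → ℝ is a continuous function with sup_{x ∈ I} |g(x) − f(x)| ≤ n^{−M}, then the cardinality of {x ∈ I : g(x) = 0} (as an extended natural number) is at least N_f(I) − C, i.e. N_f(I) ≤ (number of zeros of g in I) + C. -/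
open MeasureTheory Filter

/-- Eval bound from coefficient bound on `[-1,1]`. -/
lemma aux19_eval_bound (p : Polynomial ℝ) (c N : ℝ) (hc : ∀ i, |p.coeff i| ≤ c)
    (hN : (p.natDegree : ℝ) + 1 ≤ N) {x : ℝ} (hx : |x| ≤ 1) : |p.eval x| ≤ N * c := by
  have hc0 : 0 ≤ c := (abs_nonneg _).trans (hc 0)
  rw [Polynomial.eval_eq_sum_range]
  calc |∑ i ∈ Finset.range (p.natDegree + 1), p.coeff i * x ^ i|
      ≤ ∑ i ∈ Finset.range (p.natDegree + 1), |p.coeff i * x ^ i| :=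
        Finset.abs_sum_le_sum_abs _ _
    _ ≤ ∑ _i ∈ Finset.range (p.natDegree + 1), c := by
        apply Finset.sum_le_sum; intro i _
        rw [abs_mul]
        calc |p.coeff i| * |x ^ i| ≤ c * 1 := by
              apply mul_le_mul (hc i) ?_ (abs_nonneg _) hc0
              rw [abs_pow]
              exact pow_le_one₀ (abs_nonneg x) hx
          _ = c := mul_one c
    _ = ((p.natDegree : ℝ) + 1) * c := by
        rw [Finset.sum_const, Finset.card_range, nsmul_eq_mul]
        push_cast
        ring
    _ ≤ N * c := by
        apply mul_le_mul_of_nonneg_right hN hc0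

/-- Coefficient bound for the derivative. -/
lemma aux19_deriv_coeff (p : Polynomial ℝ) (c N : ℝ) (hc : ∀ i, |p.coeff i| ≤ c)
    (hN : (p.natDegree : ℝ) ≤ N) (hN0 : 0 ≤ N) (i : ℕ) :
    |(Polynomial.derivative p).coeff i| ≤ N * c := by
  have hc0 : 0 ≤ c := (abs_nonneg _).trans (hc 0)
  rw [Polynomial.coeff_derivative]
  rcases le_or_gt (i + 1) p.natDegree with h | h
  · rw [abs_mul]
    have h1 : |((i : ℝ) + 1)| ≤ N := by
      rw [abs_of_nonneg (by positivity)]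
      calc ((i : ℝ) + 1) ≤ (p.natDegree : ℝ) := by exact_mod_cast h
        _ ≤ N := hN
    calc |p.coeff (i + 1)| * |((i : ℝ) + 1)| ≤ c * N :=
          mul_le_mul (hc _) h1 (abs_nonneg _) hc0
      _ = N * c := mul_comm _ _
  · rw [Polynomial.coeff_eq_zero_of_natDegree_lt h, zero_mul, abs_zero]
    positivity

/-- MVT: Lipschitz bound for a polynomial on `[-1,1]` from a bound on its derivative. -/
lemma aux19_lip (p : Polynomial ℝ) (L : ℝ)
    (hL : ∀ x ∈ Set.Icc (-1 : ℝ) 1, |(Polynomial.derivative p).eval x| ≤ L)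
    {x y : ℝ} (hx : x ∈ Set.Icc (-1 : ℝ) 1) (hy : y ∈ Set.Icc (-1 : ℝ) 1) :
    |p.eval y - p.eval x| ≤ L * |y - x| := by
  have := Convex.norm_image_sub_le_of_norm_hasDerivWithin_le
    (f := fun z => p.eval z) (f' := fun z => (Polynomial.derivative p).eval z)
    (s := Set.Icc (-1 : ℝ) 1) (C := L)
    (fun z _ => (p.hasDerivAt z).hasDerivWithinAt)
    (fun z hz => by simpa [Real.norm_eq_abs] using hL z hz)
    (convex_Icc _ _) hx hy
  simpa [Real.norm_eq_abs] using this

/-- First order Taylor estimate on `[-1,1]` from a bound on the second derivative. -/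
lemma aux19_taylor (p : Polynomial ℝ) (L : ℝ) (hL0 : 0 ≤ L)
    (hL : ∀ x ∈ Set.Icc (-1 : ℝ) 1,
      |(Polynomial.derivative (Polynomial.derivative p)).eval x| ≤ L)
    {x y : ℝ} (hx : x ∈ Set.Icc (-1 : ℝ) 1) (hy : y ∈ Set.Icc (-1 : ℝ) 1) :
    |p.eval y - p.eval x - (Polynomial.derivative p).eval x * (y - x)| ≤ L * (y - x) ^ 2 := by
  set q := Polynomial.derivative p with hq
  have hsub : Set.uIcc x y ⊆ Set.Icc (-1 : ℝ) 1 := fun z hz => by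
    rcases Set.mem_uIcc.1 hz with ⟨h1, h2⟩ | ⟨h1, h2⟩ <;>
      exact ⟨by linarith [hx.1, hy.1], by linarith [hx.2, hy.2]⟩
  have key := Convex.norm_image_sub_le_of_norm_hasDerivWithin_le
    (f := fun z => p.eval z - q.eval x * z)
    (f' := fun z => q.eval z - q.eval x) (s := Set.uIcc x y) (C := L * |y - x|)
    (fun z _ => by
      convert ((p.hasDerivAt z).sub (((hasDerivAt_id z).const_mul
        (q.eval x)))).hasDerivWithinAt using 1 <;> simp [hq] <;> rfl)
    (fun z hz => by
      have h1 : |q.eval z - q.eval x| ≤ L * |z - x| :=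
        aux19_lip q L hL (hsub Set.left_mem_uIcc) (hsub hz)
      have h2 : |z - x| ≤ |y - x| := by
        rcases Set.mem_uIcc.1 hz with ⟨h, h'⟩ | ⟨h, h'⟩ <;>
          rw [abs_sub_comm z x, abs_sub_comm y x] <;> rw [abs_sub_le_iff] <;>
          constructor <;> cases abs_cases (x - y) <;> linarith
      calc ‖q.eval z - q.eval x‖ = |q.eval z - q.eval x| := rfl
        _ ≤ L * |z - x| := h1
        _ ≤ L * |y - x| := by nlinarith [abs_nonneg (z - x)]
      )
    (convex_uIcc _ _) Set.left_mem_uIcc Set.right_mem_uIcc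
  have heq : (p.eval y - q.eval x * y) - (p.eval x - q.eval x * x)
      = p.eval y - p.eval x - q.eval x * (y - x) := by ring
  rw [Real.norm_eq_abs, heq, Real.norm_eq_abs] at key
  calc |p.eval y - p.eval x - q.eval x * (y - x)| ≤ L * |y - x| * |y - x| := key
    _ = L * (y - x) ^ 2 := by rw [mul_assoc, abs_mul_abs_self]; ring

set_option maxHeartbeats 1000000 in
theorem stmt_19 (B K D A : ℝ) (hB : 0 < B) (hK : 0 < K) (hD : 0 < D) (hA : 0 < A) :
    ∃ M > (0 : ℝ), ∃ C : ℕ, ∀ n : ℕ, 2 ≤ n →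
      ∀ I : Set ℝ, I ⊆ Set.Icc (-1 : ℝ) 1 → I.OrdConnected →
        ∀ f : Polynomial ℝ, (f.natDegree : ℝ) ≤ D * n →
          (∀ i, |f.coeff i| ≤ A * (n : ℝ) ^ K) →
          (∀ x ∈ I, (n : ℝ) ^ (-B) ≤ max |f.eval x| |f.derivative.eval x|) →
          ∀ g : ℝ → ℝ, ContinuousOn g I →
            (∀ x ∈ I, |g x - f.eval x| ≤ (n : ℝ) ^ (-M)) →
            {x ∈ I | f.eval x = 0}.encard ≤ {x ∈ I | g x = 0}.encard + (C : ℕ∞) := by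
  obtain ⟨m, hm⟩ := pow_unbounded_of_one_lt (4 * A * (D + 1) ^ 3) (one_lt_two (α := ℝ))
  refine ⟨2 * B + K + 4 + m, by positivity, 2, ?_⟩
  intro n hn I hI hIoc f hdeg hcoeff hlow g hgc hgf
  set S := {x ∈ I | f.eval x = 0} with hSdef
  set T := {x ∈ I | g x = 0} with hTdef
  have hn2 : (2 : ℝ) ≤ (n : ℝ) := by exact_mod_cast hn
  have hn0 : (0 : ℝ) < (n : ℝ) := by linarith
  have hn1 : (1 : ℝ) ≤ (n : ℝ) := by linarith
  set ε : ℝ := (n : ℝ) ^ (-B) with hεdef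
  set L : ℝ := A * (D + 1) ^ 3 * (n : ℝ) ^ (K + 3) with hLdef
  have hεpos : 0 < ε := Real.rpow_pos_of_pos hn0 _
  have hLpos : 0 < L := by
    have := Real.rpow_pos_of_pos hn0 (K + 3); positivity
  set t : ℝ := ε / (2 * L) with htdef
  have htpos : 0 < t := by positivity
  set N : ℝ := (D + 1) * n with hNdef
  have hN0 : (0 : ℝ) ≤ N := by positivity
  have hc0 : (0 : ℝ) ≤ A * (n : ℝ) ^ K := by positivity
  -- degrees
  have hdegN : (f.natDegree : ℝ) ≤ N := by rw [hNdef]; nlinarith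
  have hd1 : (Polynomial.derivative f).natDegree ≤ f.natDegree :=
    (Polynomial.natDegree_derivative_le f).trans (Nat.sub_le _ _)
  have hd2 : (Polynomial.derivative (Polynomial.derivative f)).natDegree ≤ f.natDegree :=
    ((Polynomial.natDegree_derivative_le _).trans (Nat.sub_le _ _)).trans hd1
  have hdeg1 : ((Polynomial.derivative f).natDegree : ℝ) ≤ N :=
    le_trans (by exact_mod_cast hd1) hdegN
  have hdeg2 : ((Polynomial.derivative (Polynomial.derivative f)).natDegree : ℝ) + 1 ≤ N := by
    have h1 : ((Polynomial.derivative (Polynomial.derivative f)).natDegree : ℝ)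
        ≤ (f.natDegree : ℝ) := by exact_mod_cast hd2
    have : (f.natDegree : ℝ) + 1 ≤ N := by rw [hNdef]; nlinarith
    linarith
  -- coefficient bounds on derivatives
  have hco1 : ∀ i, |(Polynomial.derivative f).coeff i| ≤ N * (A * (n : ℝ) ^ K) :=
    aux19_deriv_coeff f _ N hcoeff hdegN hN0
  have hco2 : ∀ i, |(Polynomial.derivative (Polynomial.derivative f)).coeff i|
      ≤ N * (N * (A * (n : ℝ) ^ K)) :=
    aux19_deriv_coeff _ _ N hco1 hdeg1 hN0
  -- second derivative eval bound
  have hLval : N * (N * (N * (A * (n : ℝ) ^ K))) = L := by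
    rw [hNdef, hLdef, Real.rpow_add hn0]
    have h3 : (n : ℝ) ^ (3 : ℝ) = (n : ℝ) ^ (3 : ℕ) := by
      rw [← Real.rpow_natCast]; norm_num
    rw [h3]; ring
  have hb2 : ∀ x ∈ Set.Icc (-1 : ℝ) 1,
      |(Polynomial.derivative (Polynomial.derivative f)).eval x| ≤ L := by
    intro x hx
    have := aux19_eval_bound _ _ N hco2 hdeg2 (abs_le.2 ⟨hx.1, hx.2⟩)
    calc |(Polynomial.derivative (Polynomial.derivative f)).eval x|
        ≤ N * (N * (N * (A * (n : ℝ) ^ K))) := this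
      _ = L := hLval
  -- Lipschitz bound for f'
  have hlip : ∀ x ∈ Set.Icc (-1 : ℝ) 1, ∀ y ∈ Set.Icc (-1 : ℝ) 1,
      |(Polynomial.derivative f).eval y - (Polynomial.derivative f).eval x| ≤ L * |y - x| :=
    fun x hx y hy => aux19_lip _ L hb2 hx hy
  -- Taylor bound for f
  have htay : ∀ x ∈ Set.Icc (-1 : ℝ) 1, ∀ y ∈ Set.Icc (-1 : ℝ) 1,
      |f.eval y - f.eval x - (Polynomial.derivative f).eval x * (y - x)| ≤ L * (y - x) ^ 2 :=
    fun x hx y hy => aux19_taylor f L hLpos.le hb2 hx hy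
  -- at each root in I, the derivative is large
  have hder : ∀ b ∈ S, ε ≤ |(Polynomial.derivative f).eval b| := by
    intro b hb
    have h := hlow b hb.1
    rw [hb.2, abs_zero, max_eq_right (abs_nonneg _)] at h
    exact h
  -- gap between roots in I
  have hgap : ∀ a ∈ S, ∀ b ∈ S, a < b → ε ≤ L * (b - a) := by
    intro a ha b hb hab
    obtain ⟨c, hc, hc0⟩ := exists_deriv_eq_zero hab f.continuousOn (by rw [ha.2, hb.2])
    rw [f.deriv] at hc0
    have haI : a ∈ Set.Icc (-1 : ℝ) 1 := hI ha.1
    have hbI : b ∈ Set.Icc (-1 : ℝ) 1 := hI hb.1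
    have hcI : c ∈ Set.Icc (-1 : ℝ) 1 := ⟨by linarith [hc.1, haI.1], by linarith [hc.2, hbI.2]⟩
    have h1 := hlip a haI c hcI
    rw [hc0, zero_sub, abs_neg] at h1
    have h2 : |c - a| ≤ b - a := by
      rw [abs_of_nonneg (by linarith [hc.1])]; linarith [hc.2]
    calc ε ≤ |(Polynomial.derivative f).eval a| := hder a ha
      _ ≤ L * |c - a| := h1
      _ ≤ L * (b - a) := by nlinarith
  have h2t : 2 * t = ε / L := by rw [htdef]; field_simp
  have hgap2 : ∀ a ∈ S, ∀ b ∈ S, a < b → 2 * t ≤ b - a := by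
    intro a ha b hb hab
    rw [h2t, div_le_iff₀ hLpos]
    calc ε ≤ L * (b - a) := hgap a ha b hb hab
      _ = (b - a) * L := mul_comm _ _
  -- the key numeric inequality
  have hv : (n : ℝ) ^ (-(2 * B + K + 4 + m)) < ε * t - L * t ^ 2 := by
    have hval : ε * t - L * t ^ 2 = ε ^ 2 / (4 * L) := by
      rw [htdef]; field_simp; ring
    rw [hval, lt_div_iff₀ (by positivity)]
    have hε2 : ε ^ 2 = (n : ℝ) ^ (-(2 * B)) := by
      rw [hεdef, ← Real.rpow_natCast ((n : ℝ) ^ (-B)) 2, ← Real.rpow_mul hn0.le]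
      congr 1; push_cast; ring
    have hPn : (4 * A * (D + 1) ^ 3) < (n : ℝ) ^ ((m : ℝ) + 1) := by
      calc (4 * A * (D + 1) ^ 3) < 2 ^ m := hm
        _ ≤ (2 : ℝ) ^ (m + 1) := by apply pow_le_pow_right₀ one_le_two (Nat.le_succ m)
        _ = (2 : ℝ) ^ ((m : ℝ) + 1) := by
            rw [← Real.rpow_natCast 2 (m + 1)]; push_cast; ring_nf
        _ ≤ (n : ℝ) ^ ((m : ℝ) + 1) := Real.rpow_le_rpow (by norm_num) hn2 (by positivity)
    have emain : (n : ℝ) ^ (-(2 * B + K + 4 + (m : ℝ))) * (n : ℝ) ^ (K + 3)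
        * (n : ℝ) ^ ((m : ℝ) + 1) = (n : ℝ) ^ (-(2 * B)) := by
      rw [← Real.rpow_add hn0, ← Real.rpow_add hn0]; congr 1; ring
    have h1 : 0 < (n : ℝ) ^ (-(2 * B + K + 4 + (m : ℝ))) := Real.rpow_pos_of_pos hn0 _
    have h2 : 0 < (n : ℝ) ^ (K + 3) := Real.rpow_pos_of_pos hn0 _
    have h4L : 4 * L = (4 * A * (D + 1) ^ 3) * (n : ℝ) ^ (K + 3) := by rw [hLdef]; ring
    rw [hε2, ← emain, h4L]
    nlinarith [mul_pos h1 h2, hPn]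
  clear_value t
  clear_value ε L N
  -- the set of non-extremal roots
  set S' := {b ∈ S | (∃ a ∈ S, a < b) ∧ ∃ c ∈ S, b < c} with hS'def
  -- for each non-extremal root, g has a zero nearby
  have key : ∀ b ∈ S', ∃ z, z ∈ T ∧ |z - b| < t := by
    intro b hb
    obtain ⟨hbS, ⟨a, ha, hab⟩, ⟨c, hc, hbc⟩⟩ := hb
    have hbt1 : a ≤ b - t := by have := hgap2 a ha b hbS hab; linarith
    have hbt2 : b + t ≤ c := by have := hgap2 b hbS c hc hbc; linarith
    have hIcc : Set.Icc (b - t) (b + t) ⊆ I := by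
      intro x hx
      exact hIoc.out ha.1 hc.1 ⟨le_trans hbt1 hx.1, le_trans hx.2 hbt2⟩
    have hmem : ∀ x ∈ Set.Icc (b - t) (b + t), x ∈ Set.Icc (-1 : ℝ) 1 :=
      fun x hx => hI (hIcc hx)
    have hb11 : b ∈ Set.Icc (-1 : ℝ) 1 := hI hbS.1
    have hp1 : b + t ∈ Set.Icc (b - t) (b + t) := by constructor <;> linarith
    have hp2 : b - t ∈ Set.Icc (b - t) (b + t) := by constructor <;> linarith
    have htayp := htay b hb11 (b + t) (hmem _ hp1)
    have htaym := htay b hb11 (b - t) (hmem _ hp2)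
    rw [hbS.2] at htayp htaym
    have hsimp1 : b + t - b = t := by ring
    have hsimp2 : b - t - b = -t := by ring
    rw [hsimp1] at htayp
    rw [hsimp2] at htaym
    have hgfp := hgf (b + t) (hIcc hp1)
    have hgfm := hgf (b - t) (hIcc hp2)
    have habsp := abs_le.1 htayp
    have habsm := abs_le.1 htaym
    have habsgp := abs_le.1 hgfp
    have habsgm := abs_le.1 hgfm
    have hderb := hder b hbS
    have hcont : ContinuousOn g (Set.Icc (b - t) (b + t)) := hgc.mono hIcc
    have hle : b - t ≤ b + t := by linarith
    have hnt2 : (-t) ^ 2 = t ^ 2 := by ring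
    rw [hnt2] at habsm
    rcases abs_cases ((Polynomial.derivative f).eval b) with ⟨habs, hsgn⟩ | ⟨habs, hsgn⟩
    · -- f'(b) ≥ ε > 0
      have hεb : ε ≤ (Polynomial.derivative f).eval b := by rw [← habs]; exact hderb
      have hft : ε * t ≤ (Polynomial.derivative f).eval b * t :=
        mul_le_mul_of_nonneg_right hεb htpos.le
      have hgp : 0 < g (b + t) := by
        have := habsp.1; have := habsgp.1; linarith
      have hgm : g (b - t) < 0 := by
        have := habsm.2; have := habsgm.2; linarith
      have h0 : (0 : ℝ) ∈ Set.Ioo (g (b - t)) (g (b + t)) := ⟨hgm, hgp⟩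
      obtain ⟨z, hz, hgz⟩ := intermediate_value_Ioo hle hcont h0
      exact ⟨z, ⟨hIcc ⟨hz.1.le, hz.2.le⟩, hgz⟩, abs_lt.2 ⟨by linarith [hz.1], by linarith [hz.2]⟩⟩
    · -- f'(b) ≤ -ε < 0
      rw [habs] at hderb
      have hft : ε * t ≤ -(Polynomial.derivative f).eval b * t :=
        mul_le_mul_of_nonneg_right hderb htpos.le
      have hgp : g (b + t) < 0 := by
        have := habsp.2; have := habsgp.2; linarith
      have hgm : 0 < g (b - t) := by
        have := habsm.1; have := habsgm.1; linarith
      have h0 : (0 : ℝ) ∈ Set.Ioo (g (b + t)) (g (b - t)) := ⟨hgp, hgm⟩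
      obtain ⟨z, hz, hgz⟩ := intermediate_value_Ioo' hle hcont h0
      exact ⟨z, ⟨hIcc ⟨hz.1.le, hz.2.le⟩, hgz⟩, abs_lt.2 ⟨by linarith [hz.1], by linarith [hz.2]⟩⟩
  -- build an injection from S' into T
  classical
  choose φ0 hφ0 using key
  set φ : ℝ → ℝ := fun b => if h : b ∈ S' then φ0 b h else 0 with hφdef
  have hφT : ∀ b ∈ S', φ b ∈ T := by
    intro b hb; rw [hφdef]; simp only [dif_pos hb]; exact (hφ0 b hb).1
  have hφd : ∀ b ∈ S', |φ b - b| < t := by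
    intro b hb; rw [hφdef]; simp only [dif_pos hb]; exact (hφ0 b hb).2
  have hinj : Set.InjOn φ S' := by
    have hlt : ∀ b ∈ S', ∀ b' ∈ S', b < b' → φ b ≠ φ b' := by
      intro b hb b' hb' hbb' heq
      have h1 := hφd b hb
      have h2 := hφd b' hb'
      have h3 := hgap2 b hb.1 b' hb'.1 hbb'
      rw [heq] at h1
      rcases abs_lt.1 h1 with ⟨h1a, h1b⟩
      rcases abs_lt.1 h2 with ⟨h2a, h2b⟩
      linarith
    intro b hb b' hb' heq
    rcases lt_trichotomy b b' with h | h | h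
    · exact absurd heq (hlt b hb b' hb' h)
    · exact h
    · exact absurd heq.symm (hlt b' hb' b hb h)
  have hS'T : S'.encard ≤ T.encard := by
    calc S'.encard = (φ '' S').encard := (hinj.encard_image).symm
      _ ≤ T.encard := Set.encard_mono (by
          rintro _ ⟨b, hb, rfl⟩; exact hφT b hb)
  -- S has at most 2 more elements than S'
  have hSS' : S.encard ≤ S'.encard + 2 := by
    set Smin := {b | b ∈ S ∧ ∀ a ∈ S, b ≤ a} with hSmin
    set Smax := {b | b ∈ S ∧ ∀ a ∈ S, a ≤ b} with hSmax
    have hsub : S ⊆ S' ∪ (Smin ∪ Smax) := by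
      intro b hb
      by_cases h1 : ∃ a ∈ S, a < b
      · by_cases h2 : ∃ c ∈ S, b < c
        · exact Or.inl ⟨hb, h1, h2⟩
        · refine Or.inr (Or.inr ⟨hb, fun a ha => ?_⟩)
          by_contra hcon
          exact h2 ⟨a, ha, lt_of_not_ge hcon⟩
      · refine Or.inr (Or.inl ⟨hb, fun a ha => ?_⟩)
        by_contra hcon
        exact h1 ⟨a, ha, lt_of_not_ge hcon⟩
    have hminCard : Smin.encard ≤ 1 := by
      rw [Set.encard_le_one_iff]
      intro a b ha hb
      exact le_antisymm (ha.2 b hb.1) (hb.2 a ha.1)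
    have hmaxCard : Smax.encard ≤ 1 := by
      rw [Set.encard_le_one_iff]
      intro a b ha hb
      exact le_antisymm (hb.2 a ha.1) (ha.2 b hb.1)
    calc S.encard ≤ (S' ∪ (Smin ∪ Smax)).encard := Set.encard_mono hsub
      _ ≤ S'.encard + (Smin ∪ Smax).encard := Set.encard_union_le _ _
      _ ≤ S'.encard + (Smin.encard + Smax.encard) := by
          exact add_le_add le_rfl (Set.encard_union_le _ _)
      _ ≤ S'.encard + 2 := by
          apply add_le_add le_rfl
          calc Smin.encard + Smax.encard ≤ 1 + 1 := add_le_add hminCard hmaxCard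
            _ = 2 := by norm_num
  calc S.encard ≤ S'.encard + 2 := hSS'
    _ ≤ T.encard + 2 := add_le_add hS'T le_rfl
    _ = T.encard + ((2 : ℕ) : ℕ∞) := by norm_num
end
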